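/- arXiv:2103.03350 — 5 statements merged into one kernel-verified Lean document; each statement's English description precedes it below -/
import Mathlib

section
/- Let a, b, c be nonzero integers with gcd(a, b, c) = 1 and m := gcd(a, c) ≥ 3. Consider the equation E : a·x + b·y + c·z = 0 over ℤ_m. Every solution (x, y, z) ∈ ℤ_m³ has y = 0, so |T_E(ℤ_m)| = m², and the coloring f : ℤ_m → {−1, 1} with f(0) = −1 and f(t) = 1 for t ≠ 0 has exactly one monochromatic solution, namely (0, 0, 0). Hence μ_E(ℤ_m) ≤ 1/m² ≤ 1/9. -/
open Finset

/-- The set of solutions `(x, y, z) ∈ ℤ_m³` to `a·x + b·y + c·z ≡ 0 (mod m)`. -/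
def solnsZ (a b c : ℤ) (m : ℕ) [NeZero m] : Finset (ZMod m × ZMod m × ZMod m) :=
  Finset.univ.filter fun p =>
    (a : ZMod m) * p.1 + (b : ZMod m) * p.2.1 + (c : ZMod m) * p.2.2 = 0

/-- The set of solutions over `ℤ_m` that are monochromatic under the coloring `f`. -/
def monoZ (a b c : ℤ) (m : ℕ) [NeZero m] (f : ZMod m → ℤ) :
    Finset (ZMod m × ZMod m × ZMod m) :=
  (solnsZ a b c m).filter fun p => f p.1 = f p.2.1 ∧ f p.1 = f p.2.2

/-! Since `m` divides `a` and `c`, the equation reduces modulo `m` to `b·y = 0`, and `b` is a unit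
mod `m` because a common divisor of `b` and `m` would divide all of `a, b, c`. So the solutions are
exactly the triples `(x, 0, z)`. For the coloring that singles out `0`, the forced `y = 0` has
color `-1`, so a monochromatic solution needs `x = z = 0` as well. -/

theorem isCoprime_of_gcd_eq_one_of_dvd {a b c d : ℤ} (hgcd : Int.gcd a (Int.gcd b c) = 1)
    (hda : d ∣ a) (hdc : d ∣ c) : IsCoprime b d := by
  rw [Int.isCoprime_iff_gcd_eq_one, ← Nat.dvd_one, ← hgcd, ← Int.natCast_dvd_natCast]
  exact Int.dvd_coe_gcd ((Int.gcd_dvd_right _ _).trans hda)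
    (Int.dvd_coe_gcd (Int.gcd_dvd_left _ _) ((Int.gcd_dvd_right _ _).trans hdc))

section

variable {a b c : ℤ} {m : ℕ} [NeZero m]

theorem solnsZ_eq_of_dvd (hma : (m : ℤ) ∣ a) (hmc : (m : ℤ) ∣ c) (hbm : IsCoprime b m) :
    solnsZ a b c m = univ ×ˢ ({0} ×ˢ univ) := by
  have ha : (a : ZMod m) = 0 := (ZMod.intCast_zmod_eq_zero_iff_dvd a m).mpr hma
  have hc : (c : ZMod m) = 0 := (ZMod.intCast_zmod_eq_zero_iff_dvd c m).mpr hmc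
  have hb : IsUnit (b : ZMod m) := (ZMod.unitOfIsCoprime b hbm).isUnit
  ext ⟨x, y, z⟩
  simp [solnsZ, ha, hc, hb.mul_right_eq_zero, eq_comm]

theorem zero_mem_solnsZ : ((0, 0, 0) : ZMod m × ZMod m × ZMod m) ∈ solnsZ a b c m := by
  simp [solnsZ]

theorem monoZ_eq_singleton_zero_of_forall_snd_eq_zero
    (hy : ∀ p ∈ solnsZ a b c m, p.2.1 = 0) :
    monoZ a b c m (fun t => if t = 0 then -1 else 1) = {(0, 0, 0)} := by
  ext ⟨x, y, z⟩
  simp only [monoZ, mem_filter, mem_singleton, Prod.mk.injEq]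
  constructor
  · rintro ⟨hsol, hxy, hxz⟩
    obtain rfl : y = 0 := hy _ hsol
    have hx : x = 0 := by
      by_contra hx
      simp [hx] at hxy
    subst hx
    have hz : z = 0 := by
      by_contra hz
      simp [hz] at hxz
    exact ⟨rfl, rfl, hz⟩
  · rintro ⟨rfl, rfl, rfl⟩
    exact ⟨zero_mem_solnsZ, rfl, rfl⟩

end

theorem high_gcd_coloring_general (a b c : ℤ)
    (hgcd : Int.gcd a (Int.gcd b c) = 1) (m : ℕ) [NeZero m]
    (hm : m = Int.gcd a c) (hm3 : 3 ≤ m) :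
    (∀ p ∈ solnsZ a b c m, p.2.1 = 0) ∧
    (solnsZ a b c m).card = m ^ 2 ∧
    monoZ a b c m (fun t => if t = 0 then -1 else 1) = {(0, 0, 0)} ∧
    ((monoZ a b c m (fun t => if t = 0 then -1 else 1)).card : ℝ) /
      ((solnsZ a b c m).card : ℝ) ≤ 1 / (m : ℝ) ^ 2 ∧
    (1 : ℝ) / (m : ℝ) ^ 2 ≤ 1 / 9 := by
  have hma : (m : ℤ) ∣ a := hm ▸ Int.gcd_dvd_left a c
  have hmc : (m : ℤ) ∣ c := hm ▸ Int.gcd_dvd_right a c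
  have hsol := solnsZ_eq_of_dvd hma hmc (isCoprime_of_gcd_eq_one_of_dvd hgcd hma hmc)
  have hy : ∀ p ∈ solnsZ a b c m, p.2.1 = 0 := by
    rintro ⟨x, y, z⟩ hp
    simpa [hsol, eq_comm] using hp
  have hcard : (solnsZ a b c m).card = m ^ 2 := by simp [hsol, ZMod.card, sq]
  have hmono := monoZ_eq_singleton_zero_of_forall_snd_eq_zero hy
  refine ⟨hy, hcard, hmono, by simp [hmono, hcard], ?_⟩
  exact one_div_le_one_div_of_le (by norm_num) (by exact_mod_cast Nat.pow_le_pow_left hm3 2)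

/-- Let `a, b, c` be nonzero integers with `gcd(a, b, c) = 1` and `m := gcd(a, c) ≥ 3`.
For `E : a·x + b·y + c·z = 0` over `ℤ_m`: every solution has `y = 0`, so there are
exactly `m²` solutions; the coloring `f` with `f(0) = −1` and `f(t) = 1` otherwise has
`(0,0,0)` as its only monochromatic solution; hence `μ_E(ℤ_m) ≤ 1/m² ≤ 1/9`. -/
theorem high_gcd_coloring (a b c : ℤ) (ha : a ≠ 0) (hb : b ≠ 0) (hc : c ≠ 0)
    (hgcd : Int.gcd a (Int.gcd b c) = 1) (m : ℕ) [NeZero m]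
    (hm : m = Int.gcd a c) (hm3 : 3 ≤ m) :
    (∀ p ∈ solnsZ a b c m, p.2.1 = 0) ∧
    (solnsZ a b c m).card = m ^ 2 ∧
    monoZ a b c m (fun t => if t = 0 then -1 else 1) = {(0, 0, 0)} ∧
    ((monoZ a b c m (fun t => if t = 0 then -1 else 1)).card : ℝ) /
      ((solnsZ a b c m).card : ℝ) ≤ 1 / (m : ℝ) ^ 2 ∧
    (1 : ℝ) / (m : ℝ) ^ 2 ≤ 1 / 9 :=
  high_gcd_coloring_general a b c hgcd m hm hm3
end

section
/- Let a, b, c be nonzero integers, not all of the same sign, with gcd(a, b, c) = 1, and suppose some two of the three coefficients have a common factor m ≥ 3. Then the equation E : a·x + b·y + c·z = 0 is uncommon over [n]; in fact limsup_{n→∞} μ_E([n]) ≤ 1/m² ≤ 1/9 < 1/4. -/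
open Finset Filter

/-- The set of solutions `(x, y, z) ∈ [n]³` to `a·x + b·y + c·z = 0`. -/
def solns (a b c : ℤ) (n : ℕ) : Finset (ℕ × ℕ × ℕ) :=
  ((Finset.Icc 1 n) ×ˢ (Finset.Icc 1 n) ×ˢ (Finset.Icc 1 n)).filter
    fun p => a * (p.1 : ℤ) + b * (p.2.1 : ℤ) + c * (p.2.2 : ℤ) = 0

/-- The set of solutions that are monochromatic under the coloring `f`. -/
def mono (a b c : ℤ) (n : ℕ) (f : ℕ → Bool) : Finset (ℕ × ℕ × ℕ) :=
  (solns a b c n).filter fun p => f p.1 = f p.2.1 ∧ f p.1 = f p.2.2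

/-- `μ_E([n])`: the minimum, over 2-colorings of `[n]`, of the proportion of
monochromatic solutions. -/
noncomputable def muMin (a b c : ℤ) (n : ℕ) : ℝ :=
  sInf {r : ℝ | ∃ f : ℕ → Bool,
    r = ((mono a b c n f).card : ℝ) / ((solns a b c n).card : ℝ)}


lemma mem_solns {a b c : ℤ} {n : ℕ} {p : ℕ × ℕ × ℕ} :
    p ∈ solns a b c n ↔ (1 ≤ p.1 ∧ p.1 ≤ n) ∧ (1 ≤ p.2.1 ∧ p.2.1 ≤ n) ∧
      (1 ≤ p.2.2 ∧ p.2.2 ≤ n) ∧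
      a * (p.1 : ℤ) + b * (p.2.1 : ℤ) + c * (p.2.2 : ℤ) = 0 := by
  simp [solns, Finset.mem_filter, Finset.mem_product, Finset.mem_Icc, and_assoc]


lemma exists_pos_soln_aux (a c : ℤ) (ha : 0 < a) (hc : c < 0) (b : ℤ) :
    ∃ p q r : ℤ, 0 < p ∧ 0 < q ∧ 0 < r ∧ a * p + b * q + c * r = 0 := by
  have hg0 : 0 < (Int.gcd a c : ℤ) := by
    have h := Int.gcd_pos_of_ne_zero_left c ha.ne'
    exact_mod_cast h
  set g : ℤ := (Int.gcd a c : ℤ) with hg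
  have hbez : a * Int.gcdA a c + c * Int.gcdB a c = g := (Int.gcd_eq_gcd_ab a c).symm
  obtain ⟨a', ha'⟩ : g ∣ a := Int.gcd_dvd_left a c
  obtain ⟨c', hc'⟩ : g ∣ c := Int.gcd_dvd_right a c
  have ha'pos : 0 < a' := by nlinarith
  have hc'neg : c' < 0 := by nlinarith
  set u := Int.gcdA a c
  set v := Int.gcdB a c
  set p₀ : ℤ := -b * u with hp₀
  set r₀ : ℤ := -b * v with hr₀
  have hbase : a * p₀ + c * r₀ = -b * g := by
    rw [hp₀, hr₀]; linear_combination (-b) * hbez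
  set X : ℤ := |p₀| + |r₀| + 1 with hX
  have hX0 : 0 < X := by positivity
  have h1 : X ≤ -c' * X := by nlinarith
  have h2 : X ≤ a' * X := by nlinarith
  refine ⟨p₀ + -c' * X, g, r₀ + a' * X, ?_, hg0, ?_, ?_⟩
  · have := neg_abs_le p₀
    nlinarith [abs_nonneg r₀]
  · have := neg_abs_le r₀
    nlinarith [abs_nonneg p₀]
  · have : a * (-c' * X) + c * (a' * X) = 0 := by
      rw [ha', hc']; ring
    linarith [hbase]

lemma exists_pos_soln (a b c : ℤ) (ha : a ≠ 0) (hb : b ≠ 0) (hc : c ≠ 0)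
    (hsign : ¬ ((0 < a ∧ 0 < b ∧ 0 < c) ∨ (a < 0 ∧ b < 0 ∧ c < 0))) :
    ∃ p q r : ℤ, 0 < p ∧ 0 < q ∧ 0 < r ∧ a * p + b * q + c * r = 0 := by
  rcases ha.lt_or_gt with ha' | ha' <;> rcases hb.lt_or_gt with hb' | hb' <;>
    rcases hc.lt_or_gt with hc' | hc'
  · exact absurd (Or.inr ⟨ha', hb', hc'⟩) hsign
  · obtain ⟨p, q, r, h1, h2, h3, h4⟩ := exists_pos_soln_aux c a hc' ha' b
    exact ⟨r, q, p, h3, h2, h1, by linarith⟩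
  · obtain ⟨p, q, r, h1, h2, h3, h4⟩ := exists_pos_soln_aux b a hb' ha' c
    exact ⟨r, p, q, h3, h1, h2, by linarith⟩
  · obtain ⟨p, q, r, h1, h2, h3, h4⟩ := exists_pos_soln_aux b a hb' ha' c
    exact ⟨r, p, q, h3, h1, h2, by linarith⟩
  · obtain ⟨p, q, r, h1, h2, h3, h4⟩ := exists_pos_soln_aux a b ha' hb' c
    exact ⟨p, r, q, h1, h3, h2, by linarith⟩
  · obtain ⟨p, q, r, h1, h2, h3, h4⟩ := exists_pos_soln_aux a b ha' hb' c
    exact ⟨p, r, q, h1, h3, h2, by linarith⟩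
  · obtain ⟨p, q, r, h1, h2, h3, h4⟩ := exists_pos_soln_aux a c ha' hc' b
    exact ⟨p, q, r, h1, h2, h3, by linarith⟩
  · exact absurd (Or.inl ⟨ha', hb', hc'⟩) hsign


/-- A basis of the solution lattice of `a x + b y + c z = 0`. -/
lemma exists_basis (a b c : ℤ) (hb : b ≠ 0) (hc : c ≠ 0)
    (hgcd : Int.gcd a (Int.gcd b c) = 1) :
    ∃ w11 w12 w13 w21 w22 w23 : ℤ,
      w11 = 0 ∧ w21 ≠ 0 ∧ w12 ≠ 0 ∧
      a * w11 + b * w12 + c * w13 = 0 ∧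
      a * w21 + b * w22 + c * w23 = 0 ∧
      ∀ x y z : ℤ, a * x + b * y + c * z = 0 →
        ∃ s t : ℤ, x = s * w11 + t * w21 ∧ y = s * w12 + t * w22 ∧
          z = s * w13 + t * w23 := by
  have hgN : 0 < Int.gcd b c := Int.gcd_pos_of_ne_zero_left c hb
  have hg0 : 0 < (Int.gcd b c : ℤ) := by exact_mod_cast hgN
  set g : ℤ := (Int.gcd b c : ℤ) with hg
  have hbez : b * Int.gcdA b c + c * Int.gcdB b c = g := (Int.gcd_eq_gcd_ab b c).symm
  obtain ⟨b', hb'⟩ : g ∣ b := Int.gcd_dvd_left b c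
  obtain ⟨c', hc'⟩ : g ∣ c := Int.gcd_dvd_right b c
  have hb'0 : b' ≠ 0 := by rintro rfl; simp at hb'; exact hb hb'
  have hc'0 : c' ≠ 0 := by rintro rfl; simp at hc'; exact hc hc'
  set u := Int.gcdA b c
  set v := Int.gcdB b c
  refine ⟨0, c', -b', g, -a * u, -a * v, rfl, hg0.ne', hc'0, ?_, ?_, ?_⟩
  · rw [hb', hc']; ring
  · linear_combination (-a) * hbez
  · intro x y z hxyz
    have hcop : Int.gcd g a = 1 := by rw [Int.gcd_comm]; exact hgcd
    have hdvd1 : g ∣ a * x := by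
      have hax : a * x = -(b * y + c * z) := by linarith
      rw [hax, hb', hc']
      exact dvd_neg.mpr ⟨b' * y + c' * z, by ring⟩
    have hgx : g ∣ x := Int.dvd_of_dvd_mul_right_of_gcd_one hdvd1 hcop
    obtain ⟨t, ht⟩ := hgx
    set y₂ : ℤ := y + t * (a * u) with hy₂
    set z₂ : ℤ := z + t * (a * v) with hz₂
    have h2 : b * y₂ + c * z₂ = 0 := by
      rw [hy₂, hz₂]
      linear_combination hxyz + (t * a) * hbez - a * ht
    have h3 : b' * y₂ = -(c' * z₂) := by
      have h4 : g * (b' * y₂ + c' * z₂) = 0 := by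
        have h4' : g * (b' * y₂ + c' * z₂) = b * y₂ + c * z₂ := by
          rw [hb', hc']; ring
        rw [h4']; exact h2
      rcases mul_eq_zero.1 h4 with h | h
      · exact absurd h hg0.ne'
      · linarith
    have hcop2 : Int.gcd b' c' = 1 := by
      have h5 := Int.gcd_div_gcd_div_gcd (i := b) (j := c) hgN
      have hb'' : b / g = b' := by rw [hb']; exact Int.mul_ediv_cancel_left _ hg0.ne'
      have hc'' : c / g = c' := by rw [hc']; exact Int.mul_ediv_cancel_left _ hg0.ne'
      rw [← hg] at h5
      rwa [hb'', hc''] at h5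
    have hdvd2 : c' ∣ y₂ := by
      have h6 : c' ∣ b' * y₂ := ⟨-z₂, by linarith⟩
      exact Int.dvd_of_dvd_mul_right_of_gcd_one h6
        (by rw [Int.gcd_comm]; exact hcop2)
    obtain ⟨s, hs⟩ := hdvd2
    have hz₂' : z₂ = -b' * s := by
      have h7 : c' * (z₂ + b' * s) = 0 := by rw [hs] at h3; linarith
      rcases mul_eq_zero.1 h7 with h | h
      · exact absurd h hc'0
      · linarith
    exact ⟨s, t, by linarith, by rw [hs] at hy₂; linarith, by rw [hz₂'] at hz₂; linarith⟩

set_option maxHeartbeats 1000000 in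
lemma counting (a b c : ℤ) (ha : a ≠ 0) (hb : b ≠ 0) (hc : c ≠ 0)
    (hsign : ¬ ((0 < a ∧ 0 < b ∧ 0 < c) ∨ (a < 0 ∧ b < 0 ∧ c < 0)))
    (hgcd : Int.gcd a (Int.gcd b c) = 1) (m : ℕ) (hm3 : 3 ≤ m) :
    ∃ C V : ℕ, 0 < V ∧
      (∀ k : ℕ, m ^ 2 * (solns a b c k).card ≤ (solns a b c (m * k + C)).card) ∧
      (∀ n : ℕ, (n / V) ^ 2 ≤ (solns a b c n).card) := by
  obtain ⟨p, q, r, hp, hq, hr, hP⟩ := exists_pos_soln a b c ha hb hc hsign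
  obtain ⟨w11, w12, w13, w21, w22, w23, h11, h21, h12, hw1, hw2, hrep⟩ :=
    exists_basis a b c hb hc hgcd
  -- the representation of P in the basis
  obtain ⟨σ, τ, hPx, hPy, hPz⟩ := hrep p q r hP
  -- choice of N
  set N : ℤ := |w11| + |w12| + |w13| + |w21| + |w22| + |w23| + 1 with hN
  have hN1 : 1 ≤ N := by
    rw [hN]
    have := abs_nonneg w11; have := abs_nonneg w12; have := abs_nonneg w13
    have := abs_nonneg w21; have := abs_nonneg w22; have := abs_nonneg w23
    linarith
  have hmZ : (3 : ℤ) ≤ (m : ℤ) := by exact_mod_cast hm3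
  have hmN : 3 ≤ (m : ℤ) * N := by nlinarith [mul_le_mul_of_nonneg_left hN1 (by linarith : (0:ℤ) ≤ (m:ℤ))]
  -- the two shifted vectors, positive
  set A1 : ℤ := w11 + (m : ℤ) * N * p with hA1
  set A2 : ℤ := w12 + (m : ℤ) * N * q with hA2
  set A3 : ℤ := w13 + (m : ℤ) * N * r with hA3
  set B1 : ℤ := w21 + (m : ℤ) * N * p with hB1
  set B2 : ℤ := w22 + (m : ℤ) * N * q with hB2
  set B3 : ℤ := w23 + (m : ℤ) * N * r with hB3
  have habs : |w11| ≤ N - 1 ∧ |w12| ≤ N - 1 ∧ |w13| ≤ N - 1 ∧ |w21| ≤ N - 1 ∧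
      |w22| ≤ N - 1 ∧ |w23| ≤ N - 1 := by
    refine ⟨?_, ?_, ?_, ?_, ?_, ?_⟩ <;>
      · rw [hN]
        have := abs_nonneg w11; have := abs_nonneg w12; have := abs_nonneg w13
        have := abs_nonneg w21; have := abs_nonneg w22; have := abs_nonneg w23
        linarith
  obtain ⟨e11, e12, e13, e21, e22, e23⟩ := habs
  have hA1p : 1 ≤ A1 := by
    have h' := mul_le_mul_of_nonneg_left (by linarith : (1:ℤ) ≤ p) (by linarith : (0:ℤ) ≤ (m:ℤ)*N)
    have h'' := mul_le_mul_of_nonneg_right hmZ (by linarith : (0:ℤ) ≤ N)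
    have := neg_abs_le w11
    rw [hA1]; linarith
  have hA2p : 1 ≤ A2 := by
    have h' := mul_le_mul_of_nonneg_left (by linarith : (1:ℤ) ≤ q) (by linarith : (0:ℤ) ≤ (m:ℤ)*N)
    have h'' := mul_le_mul_of_nonneg_right hmZ (by linarith : (0:ℤ) ≤ N)
    have := neg_abs_le w12
    rw [hA2]; linarith
  have hA3p : 1 ≤ A3 := by
    have h' := mul_le_mul_of_nonneg_left (by linarith : (1:ℤ) ≤ r) (by linarith : (0:ℤ) ≤ (m:ℤ)*N)
    have h'' := mul_le_mul_of_nonneg_right hmZ (by linarith : (0:ℤ) ≤ N)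
    have := neg_abs_le w13
    rw [hA3]; linarith
  have hB1p : 1 ≤ B1 := by
    have h' := mul_le_mul_of_nonneg_left (by linarith : (1:ℤ) ≤ p) (by linarith : (0:ℤ) ≤ (m:ℤ)*N)
    have h'' := mul_le_mul_of_nonneg_right hmZ (by linarith : (0:ℤ) ≤ N)
    have := neg_abs_le w21
    rw [hB1]; linarith
  have hB2p : 1 ≤ B2 := by
    have h' := mul_le_mul_of_nonneg_left (by linarith : (1:ℤ) ≤ q) (by linarith : (0:ℤ) ≤ (m:ℤ)*N)
    have h'' := mul_le_mul_of_nonneg_right hmZ (by linarith : (0:ℤ) ≤ N)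
    have := neg_abs_le w22
    rw [hB2]; linarith
  have hB3p : 1 ≤ B3 := by
    have h' := mul_le_mul_of_nonneg_left (by linarith : (1:ℤ) ≤ r) (by linarith : (0:ℤ) ≤ (m:ℤ)*N)
    have h'' := mul_le_mul_of_nonneg_right hmZ (by linarith : (0:ℤ) ≤ N)
    have := neg_abs_le w23
    rw [hB3]; linarith
  -- equations for A and B
  have heqA : a * A1 + b * A2 + c * A3 = 0 := by
    rw [hA1, hA2, hA3]; linear_combination hw1 + ((m:ℤ) * N) * hP
  have heqB : a * B1 + b * B2 + c * B3 = 0 := by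
    rw [hB1, hB2, hB3]; linear_combination hw2 + ((m:ℤ) * N) * hP
  -- lift shifted vectors to ℕ
  obtain ⟨a1, ha1⟩ : ∃ n : ℕ, (n:ℤ) = A1 := ⟨A1.toNat, Int.toNat_of_nonneg (by linarith)⟩
  obtain ⟨a2, ha2⟩ : ∃ n : ℕ, (n:ℤ) = A2 := ⟨A2.toNat, Int.toNat_of_nonneg (by linarith)⟩
  obtain ⟨a3, ha3⟩ : ∃ n : ℕ, (n:ℤ) = A3 := ⟨A3.toNat, Int.toNat_of_nonneg (by linarith)⟩
  obtain ⟨b1, hb1⟩ : ∃ n : ℕ, (n:ℤ) = B1 := ⟨B1.toNat, Int.toNat_of_nonneg (by linarith)⟩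
  obtain ⟨b2, hb2⟩ : ∃ n : ℕ, (n:ℤ) = B2 := ⟨B2.toNat, Int.toNat_of_nonneg (by linarith)⟩
  obtain ⟨b3, hb3⟩ : ∃ n : ℕ, (n:ℤ) = B3 := ⟨B3.toNat, Int.toNat_of_nonneg (by linarith)⟩
  have ha1p : 1 ≤ a1 := by exact_mod_cast ha1 ▸ hA1p
  have ha2p : 1 ≤ a2 := by exact_mod_cast ha2 ▸ hA2p
  have ha3p : 1 ≤ a3 := by exact_mod_cast ha3 ▸ hA3p
  have hb1p : 1 ≤ b1 := by exact_mod_cast hb1 ▸ hB1p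
  have hb2p : 1 ≤ b2 := by exact_mod_cast hb2 ▸ hB2p
  have hb3p : 1 ≤ b3 := by exact_mod_cast hb3 ▸ hB3p
  have heqA' : a * (a1:ℤ) + b * (a2:ℤ) + c * (a3:ℤ) = 0 := by
    rw [ha1, ha2, ha3]; exact heqA
  have heqB' : a * (b1:ℤ) + b * (b2:ℤ) + c * (b3:ℤ) = 0 := by
    rw [hb1, hb2, hb3]; exact heqB
  set W : ℕ := a1 + a2 + a3 + b1 + b2 + b3 with hW
  have hm0 : (m:ℤ) ≠ 0 := by positivity
  have hm1 : 1 ≤ m := by omega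
  refine ⟨m * W, 2 * W, by omega, ?_, ?_⟩
  · -- the injection bound
    intro k
    have hcard : ((solns a b c k) ×ˢ ((range m) ×ˢ (range m))).card
        = m ^ 2 * (solns a b c k).card := by
      simp [Finset.card_product, card_range]; ring
    rw [← hcard]
    apply Finset.card_le_card_of_injOn
      (fun w => (m * w.1.1 + w.2.1 * a1 + w.2.2 * b1,
                 m * w.1.2.1 + w.2.1 * a2 + w.2.2 * b2,
                 m * w.1.2.2 + w.2.1 * a3 + w.2.2 * b3))
    · rintro ⟨⟨x, y, z⟩, s, t⟩ hw
      simp only [Finset.mem_coe, Finset.mem_product, Finset.mem_range] at hw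
      obtain ⟨hxyz, hs, ht⟩ := hw
      dsimp only
      rw [mem_solns] at hxyz; rw [Finset.mem_coe, mem_solns]
      dsimp only
      dsimp only at hxyz
      obtain ⟨⟨hx1, hxk⟩, ⟨hy1, hyk⟩, ⟨hz1, hzk⟩, heq⟩ := hxyz
      refine ⟨⟨?_, ?_⟩, ⟨?_, ?_⟩, ⟨?_, ?_⟩, ?_⟩
      · have hmx : 1 ≤ m * x := Nat.one_le_iff_ne_zero.2 (Nat.mul_ne_zero (by omega) (by omega))
        exact hmx.trans ((Nat.le_add_right _ _).trans (Nat.le_add_right _ _))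
      · linarith [Nat.mul_le_mul (le_refl m) hxk, Nat.mul_le_mul (Nat.le_of_lt hs) (le_refl a1),
          Nat.mul_le_mul (Nat.le_of_lt ht) (le_refl b1),
          Nat.mul_le_mul (le_refl m) (show a1 + b1 ≤ W by omega)]
      · have hmx : 1 ≤ m * y := Nat.one_le_iff_ne_zero.2 (Nat.mul_ne_zero (by omega) (by omega))
        exact hmx.trans ((Nat.le_add_right _ _).trans (Nat.le_add_right _ _))
      · linarith [Nat.mul_le_mul (le_refl m) hyk, Nat.mul_le_mul (Nat.le_of_lt hs) (le_refl a2),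
          Nat.mul_le_mul (Nat.le_of_lt ht) (le_refl b2),
          Nat.mul_le_mul (le_refl m) (show a2 + b2 ≤ W by omega)]
      · have hmx : 1 ≤ m * z := Nat.one_le_iff_ne_zero.2 (Nat.mul_ne_zero (by omega) (by omega))
        exact hmx.trans ((Nat.le_add_right _ _).trans (Nat.le_add_right _ _))
      · linarith [Nat.mul_le_mul (le_refl m) hzk, Nat.mul_le_mul (Nat.le_of_lt hs) (le_refl a3),
          Nat.mul_le_mul (Nat.le_of_lt ht) (le_refl b3),
          Nat.mul_le_mul (le_refl m) (show a3 + b3 ≤ W by omega)]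
      · push_cast
        linear_combination (m:ℤ) * heq + (s:ℤ) * heqA' + (t:ℤ) * heqB'
    · rintro ⟨⟨x, y, z⟩, s, t⟩ hw ⟨⟨x', y', z'⟩, s', t'⟩ hw' heq
      simp only [Finset.coe_product, Set.mem_prod, Finset.mem_coe, Finset.mem_range,
        Finset.coe_range, Set.mem_Iio] at hw hw'
      obtain ⟨hxyz, hs, ht⟩ := hw
      obtain ⟨hxyz', hs', ht'⟩ := hw'
      simp only [Prod.mk.injEq] at heq
      obtain ⟨h1, h2, h3⟩ := heq
      rw [mem_solns] at hxyz hxyz'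
      have H1 : (m:ℤ) * x + s * A1 + t * B1 = m * x' + s' * A1 + t' * B1 := by
        rw [← ha1, ← hb1]; exact_mod_cast congrArg (fun u : ℕ => (u : ℤ)) h1
      have H2 : (m:ℤ) * y + s * A2 + t * B2 = m * y' + s' * A2 + t' * B2 := by
        rw [← ha2, ← hb2]; exact_mod_cast congrArg (fun u : ℕ => (u : ℤ)) h2
      have H3 : (m:ℤ) * z + s * A3 + t * B3 = m * z' + s' * A3 + t' * B3 := by
        rw [← ha3, ← hb3]; exact_mod_cast congrArg (fun u : ℕ => (u : ℤ)) h3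
      set DS : ℤ := (s:ℤ) - (s':ℤ) with hDS
      set DT : ℤ := (t:ℤ) - (t':ℤ) with hDT
      set u1 : ℤ := ((x':ℤ) - x) - (DS + DT) * N * p with hu1d
      set u2 : ℤ := ((y':ℤ) - y) - (DS + DT) * N * q with hu2d
      set u3 : ℤ := ((z':ℤ) - z) - (DS + DT) * N * r with hu3d
      have hu1 : DS * w11 + DT * w21 = m * u1 := by
        rw [hu1d, hDS, hDT]
        have e1 : A1 = w11 + (m:ℤ) * N * p := hA1
        have e2 : B1 = w21 + (m:ℤ) * N * p := hB1
        linear_combination H1 - ((s:ℤ) - s') * e1 - ((t:ℤ) - t') * e2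
      have hu2 : DS * w12 + DT * w22 = m * u2 := by
        rw [hu2d, hDS, hDT]
        have e1 : A2 = w12 + (m:ℤ) * N * q := hA2
        have e2 : B2 = w22 + (m:ℤ) * N * q := hB2
        linear_combination H2 - ((s:ℤ) - s') * e1 - ((t:ℤ) - t') * e2
      have hu3 : DS * w13 + DT * w23 = m * u3 := by
        rw [hu3d, hDS, hDT]
        have e1 : A3 = w13 + (m:ℤ) * N * r := hA3
        have e2 : B3 = w23 + (m:ℤ) * N * r := hB3
        linear_combination H3 - ((s:ℤ) - s') * e1 - ((t:ℤ) - t') * e2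
      have husol : a * u1 + b * u2 + c * u3 = 0 := by
        have hmu : (m:ℤ) * (a * u1 + b * u2 + c * u3) = 0 := by
          linear_combination (-a) * hu1 + (-b) * hu2 + (-c) * hu3 + DS * hw1 + DT * hw2
        exact (mul_eq_zero.mp hmu).resolve_left hm0
      obtain ⟨s0, t0, hru1, hru2, hru3⟩ := hrep u1 u2 u3 husol
      have hco1 : (DT - m * t0) * w21 = 0 := by
        rw [h11] at hu1 hru1
        linear_combination hu1 + (m:ℤ) * hru1
      have hDTeq : DT = m * t0 := by
        have := (mul_eq_zero.mp hco1).resolve_right h21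
        linarith
      have hmpos : (0:ℤ) < m := by positivity
      have hDT0 : DT = 0 := by
        have hl : -(m:ℤ) < DT := by
          rw [hDT]
          have : (t':ℤ) < m := by exact_mod_cast ht'
          have ht0 : (0:ℤ) ≤ t := by positivity
          linarith
        have hr' : DT < m := by
          rw [hDT]
          have : (t:ℤ) < m := by exact_mod_cast ht
          have : (0:ℤ) ≤ t' := by positivity
          linarith
        rw [hDTeq] at hl hr'
        have h1' : t0 < 1 := by
          have := (mul_lt_mul_iff_right₀ hmpos).mp (by linarith : (m:ℤ) * t0 < m * 1)
          exact this
        have h2' : -1 < t0 := by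
          have := (mul_lt_mul_iff_right₀ hmpos).mp (by linarith : (m:ℤ) * (-1) < m * t0)
          exact this
        have : t0 = 0 := by omega
        rw [hDTeq, this, mul_zero]
      have hco2 : (DS - m * s0) * w12 = 0 := by
        have ht00 : t0 = 0 := by
          have := hDTeq.symm.trans hDT0
          rcases mul_eq_zero.mp this with h | h
          · exact absurd h hm0
          · exact h
        rw [hDT0] at hu2
        rw [ht00] at hru2
        linear_combination hu2 + (m:ℤ) * hru2
      have hDSeq : DS = m * s0 := by
        have := (mul_eq_zero.mp hco2).resolve_right h12
        linarith
      have hDS0 : DS = 0 := by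
        have hl : -(m:ℤ) < DS := by
          rw [hDS]
          have : (s':ℤ) < m := by exact_mod_cast hs'
          have : (0:ℤ) ≤ s := by positivity
          linarith
        have hr' : DS < m := by
          rw [hDS]
          have : (s:ℤ) < m := by exact_mod_cast hs
          have : (0:ℤ) ≤ s' := by positivity
          linarith
        rw [hDSeq] at hl hr'
        have h1' : s0 < 1 := (mul_lt_mul_iff_right₀ hmpos).mp (by linarith : (m:ℤ) * s0 < m * 1)
        have h2' : -1 < s0 := (mul_lt_mul_iff_right₀ hmpos).mp (by linarith : (m:ℤ) * (-1) < m * s0)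
        have : s0 = 0 := by omega
        rw [hDSeq, this, mul_zero]
      have hss : s = s' := by
        have : (s:ℤ) = s' := by rw [hDS] at hDS0; linarith
        exact_mod_cast this
      have htt : t = t' := by
        have : (t:ℤ) = t' := by rw [hDT] at hDT0; linarith
        exact_mod_cast this
      have hxx : x = x' := by
        have : (m:ℤ) * x = m * x' := by
          rw [hDS] at hDS0; rw [hDT] at hDT0
          have hs'' : (s:ℤ) = s' := by linarith
          have ht'' : (t:ℤ) = t' := by linarith
          rw [hs'', ht''] at H1; linarith
        have : (x:ℤ) = x' := mul_left_cancel₀ hm0 this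
        exact_mod_cast this
      have hyy : y = y' := by
        have : (m:ℤ) * y = m * y' := by
          rw [hDS] at hDS0; rw [hDT] at hDT0
          have hs'' : (s:ℤ) = s' := by linarith
          have ht'' : (t:ℤ) = t' := by linarith
          rw [hs'', ht''] at H2; linarith
        have : (y:ℤ) = y' := mul_left_cancel₀ hm0 this
        exact_mod_cast this
      have hzz : z = z' := by
        have : (m:ℤ) * z = m * z' := by
          rw [hDS] at hDS0; rw [hDT] at hDT0
          have hs'' : (s:ℤ) = s' := by linarith
          have ht'' : (t:ℤ) = t' := by linarith
          rw [hs'', ht''] at H3; linarith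
        have : (z:ℤ) = z' := mul_left_cancel₀ hm0 this
        exact_mod_cast this
      subst hxx; subst hyy; subst hzz; subst hss; subst htt; rfl
  · -- lower bound
    intro n
    have hq : (Finset.Icc 1 (n / (2 * W)) ×ˢ Finset.Icc 1 (n / (2 * W))).card
        = (n / (2 * W)) ^ 2 := by
      simp [Finset.card_product, Nat.card_Icc]; ring
    rw [← hq]
    apply Finset.card_le_card_of_injOn
      (fun w => (w.1 * a1 + w.2 * b1, w.1 * a2 + w.2 * b2, w.1 * a3 + w.2 * b3))
    · rintro ⟨s, t⟩ hw
      simp only [Finset.mem_coe, Finset.mem_product, Finset.mem_Icc] at hw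
      obtain ⟨⟨hs1, hs2⟩, ht1, ht2⟩ := hw
      have hdle : (n / (2 * W)) * (2 * W) ≤ n := Nat.div_mul_le_self n (2 * W)
      rw [Finset.mem_coe, mem_solns]
      dsimp only
      refine ⟨⟨?_, ?_⟩, ⟨?_, ?_⟩, ⟨?_, ?_⟩, ?_⟩
      · have h1 : 1 ≤ s * a1 := Nat.one_le_iff_ne_zero.2 (Nat.mul_ne_zero (by omega) (by omega))
        exact h1.trans (Nat.le_add_right _ _)
      · have h1 : s * a1 ≤ (n / (2 * W)) * a1 := Nat.mul_le_mul hs2 (le_refl a1)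
        have h2 : t * b1 ≤ (n / (2 * W)) * b1 := Nat.mul_le_mul ht2 (le_refl b1)
        have h3 : (n / (2 * W)) * a1 + (n / (2 * W)) * b1 ≤ (n / (2 * W)) * (2 * W) := by
          have : a1 + b1 ≤ 2 * W := by omega
          calc (n / (2 * W)) * a1 + (n / (2 * W)) * b1 = (n / (2 * W)) * (a1 + b1) := by ring
            _ ≤ (n / (2 * W)) * (2 * W) := Nat.mul_le_mul (le_refl _) this
        omega
      · have h1 : 1 ≤ s * a2 := Nat.one_le_iff_ne_zero.2 (Nat.mul_ne_zero (by omega) (by omega))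
        exact h1.trans (Nat.le_add_right _ _)
      · have h1 : s * a2 ≤ (n / (2 * W)) * a2 := Nat.mul_le_mul hs2 (le_refl a2)
        have h2 : t * b2 ≤ (n / (2 * W)) * b2 := Nat.mul_le_mul ht2 (le_refl b2)
        have h3 : (n / (2 * W)) * a2 + (n / (2 * W)) * b2 ≤ (n / (2 * W)) * (2 * W) := by
          have : a2 + b2 ≤ 2 * W := by omega
          calc (n / (2 * W)) * a2 + (n / (2 * W)) * b2 = (n / (2 * W)) * (a2 + b2) := by ring
            _ ≤ (n / (2 * W)) * (2 * W) := Nat.mul_le_mul (le_refl _) this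
        omega
      · have h1 : 1 ≤ s * a3 := Nat.one_le_iff_ne_zero.2 (Nat.mul_ne_zero (by omega) (by omega))
        exact h1.trans (Nat.le_add_right _ _)
      · have h1 : s * a3 ≤ (n / (2 * W)) * a3 := Nat.mul_le_mul hs2 (le_refl a3)
        have h2 : t * b3 ≤ (n / (2 * W)) * b3 := Nat.mul_le_mul ht2 (le_refl b3)
        have h3 : (n / (2 * W)) * a3 + (n / (2 * W)) * b3 ≤ (n / (2 * W)) * (2 * W) := by
          have : a3 + b3 ≤ 2 * W := by omega
          calc (n / (2 * W)) * a3 + (n / (2 * W)) * b3 = (n / (2 * W)) * (a3 + b3) := by ring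
            _ ≤ (n / (2 * W)) * (2 * W) := Nat.mul_le_mul (le_refl _) this
        omega
      · push_cast
        linear_combination (s:ℤ) * heqA' + (t:ℤ) * heqB'
    · rintro ⟨s, t⟩ hw ⟨s', t'⟩ hw' heq
      simp only [Prod.mk.injEq] at heq
      obtain ⟨h1, h2, h3⟩ := heq
      have E1 : (s:ℤ) * A1 + (t:ℤ) * B1 = (s':ℤ) * A1 + (t':ℤ) * B1 := by
        rw [← ha1, ← hb1]; exact_mod_cast congrArg (fun u : ℕ => (u : ℤ)) h1
      have E2 : (s:ℤ) * A2 + (t:ℤ) * B2 = (s':ℤ) * A2 + (t':ℤ) * B2 := by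
        rw [← ha2, ← hb2]; exact_mod_cast congrArg (fun u : ℕ => (u : ℤ)) h2
      set DS : ℤ := (s:ℤ) - (s':ℤ) with hDS
      set DT : ℤ := (t:ℤ) - (t':ℤ) with hDT
      set c1 : ℤ := DS + (DS + DT) * ((m:ℤ) * N) * σ with hc1d
      set c2 : ℤ := DT + (DS + DT) * ((m:ℤ) * N) * τ with hc2d
      have hcc1 : c1 * w11 + c2 * w21 = 0 := by
        rw [hc1d, hc2d, hDS, hDT]
        linear_combination E1 + (-( (s:ℤ) - s')) * hA1 + (-((t:ℤ) - t')) * hB1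
          + (-(((s:ℤ) - s') + ((t:ℤ) - t')) * ((m:ℤ) * N)) * hPx
      have hcc2 : c1 * w12 + c2 * w22 = 0 := by
        rw [hc1d, hc2d, hDS, hDT]
        linear_combination E2 + (-( (s:ℤ) - s')) * hA2 + (-((t:ℤ) - t')) * hB2
          + (-(((s:ℤ) - s') + ((t:ℤ) - t')) * ((m:ℤ) * N)) * hPy
      have hc2z : c2 = 0 := by
        rw [h11] at hcc1
        have : c2 * w21 = 0 := by linarith
        exact (mul_eq_zero.mp this).resolve_right h21
      have hc1z : c1 = 0 := by
        rw [hc2z] at hcc2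
        have : c1 * w12 = 0 := by linarith
        exact (mul_eq_zero.mp this).resolve_right h12
      have hsum : (DS + DT) * (1 + (m:ℤ) * N * (σ + τ)) = 0 := by
        rw [hc1d] at hc1z; rw [hc2d] at hc2z
        linear_combination hc1z + hc2z
      have hfac : (1 : ℤ) + (m:ℤ) * N * (σ + τ) ≠ 0 := by
        intro hzero
        have hdvd : (m:ℤ) * N ∣ (1 : ℤ) := by
          have : (m:ℤ) * N ∣ (-1 : ℤ) := ⟨σ + τ, by linarith⟩
          exact (dvd_neg).mp this
        exact absurd (Int.le_of_dvd one_pos hdvd) (by linarith)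
      have hDSDT : DS + DT = 0 := (mul_eq_zero.mp hsum).resolve_right hfac
      have hDS0 : DS = 0 := by
        rw [hc1d, hDSDT] at hc1z; simpa using hc1z
      have hDT0 : DT = 0 := by linarith
      have hss : s = s' := by
        have : (s:ℤ) = s' := by rw [hDS] at hDS0; linarith
        exact_mod_cast this
      have htt : t = t' := by
        have : (t:ℤ) = t' := by rw [hDT] at hDT0; linarith
        exact_mod_cast this
      subst hss; subst htt; rfl

lemma solns_mono (a b c : ℤ) {n n' : ℕ} (h : n ≤ n') :
    solns a b c n ⊆ solns a b c n' := by
  intro p hp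
  rw [mem_solns] at hp ⊢
  exact ⟨⟨hp.1.1, hp.1.2.trans h⟩, ⟨hp.2.1.1, hp.2.1.2.trans h⟩,
    ⟨hp.2.2.1.1, hp.2.2.1.2.trans h⟩, hp.2.2.2⟩

lemma solns_boundary (a b c : ℤ) (ha : a ≠ 0) (hb : b ≠ 0) (hc : c ≠ 0) (n C : ℕ) :
    (solns a b c (n + C)).card ≤ (solns a b c n).card + 3 * (C * (n + C)) := by
  classical
  set S := solns a b c (n + C) with hS
  set S1 := S.filter (fun p => n < p.1) with hS1
  set S2 := S.filter (fun p => n < p.2.1) with hS2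
  set S3 := S.filter (fun p => n < p.2.2) with hS3
  have hsub : S ⊆ solns a b c n ∪ (S1 ∪ (S2 ∪ S3)) := by
    intro p hp
    rcases le_or_gt p.1 n with h1 | h1
    · rcases le_or_gt p.2.1 n with h2 | h2
      · rcases le_or_gt p.2.2 n with h3 | h3
        · apply Finset.mem_union_left
          rw [mem_solns] at hp ⊢
          exact ⟨⟨hp.1.1, h1⟩, ⟨hp.2.1.1, h2⟩, ⟨hp.2.2.1.1, h3⟩, hp.2.2.2⟩
        · exact Finset.mem_union_right _ (Finset.mem_union_right _
            (Finset.mem_union_right _ (Finset.mem_filter.2 ⟨hp, h3⟩)))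
      · exact Finset.mem_union_right _ (Finset.mem_union_right _
          (Finset.mem_union_left _ (Finset.mem_filter.2 ⟨hp, h2⟩)))
    · exact Finset.mem_union_right _ (Finset.mem_union_left _ (Finset.mem_filter.2 ⟨hp, h1⟩))
  have hbd : ∀ T : Finset (ℕ × ℕ × ℕ), T.card ≤ (Finset.Ioc n (n + C) ×ˢ Finset.Icc 1 (n + C)).card →
      True := fun _ _ => trivial
  have hcard_target : (Finset.Ioc n (n + C) ×ˢ Finset.Icc 1 (n + C)).card = C * (n + C) := by
    simp [Finset.card_product, Nat.card_Ioc, Nat.card_Icc]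
  have h1 : S1.card ≤ C * (n + C) := by
    rw [← hcard_target]
    apply Finset.card_le_card_of_injOn (fun p => (p.1, p.2.1))
    · intro p hp
      rw [hS1, Finset.mem_coe, Finset.mem_filter, hS, mem_solns] at hp
      simp only [Finset.mem_coe, Finset.mem_product, Finset.mem_Ioc, Finset.mem_Icc]
      exact ⟨⟨hp.2, hp.1.1.2⟩, hp.1.2.1.1, hp.1.2.1.2⟩
    · intro p hp p' hp' he
      simp only [Prod.mk.injEq] at he
      simp only [hS1, Finset.coe_filter, Set.mem_setOf_eq, hS] at hp hp'
      rw [mem_solns] at hp hp'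
      obtain ⟨⟨_, _, _, e⟩, _⟩ := hp
      obtain ⟨⟨_, _, _, e'⟩, _⟩ := hp'
      have hz : (p.2.2 : ℤ) = p'.2.2 := by
        have : c * (p.2.2 : ℤ) = c * (p'.2.2 : ℤ) := by
          rw [he.1, he.2] at e; linarith
        exact mul_left_cancel₀ hc this
      have hz' : p.2.2 = p'.2.2 := by exact_mod_cast hz
      exact Prod.ext he.1 (Prod.ext he.2 hz')
  have h2 : S2.card ≤ C * (n + C) := by
    rw [← hcard_target]
    apply Finset.card_le_card_of_injOn (fun p => (p.2.1, p.2.2))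
    · intro p hp
      rw [hS2, Finset.mem_coe, Finset.mem_filter, hS, mem_solns] at hp
      simp only [Finset.mem_coe, Finset.mem_product, Finset.mem_Ioc, Finset.mem_Icc]
      exact ⟨⟨hp.2, hp.1.2.1.2⟩, hp.1.2.2.1.1, hp.1.2.2.1.2⟩
    · intro p hp p' hp' he
      simp only [Prod.mk.injEq] at he
      simp only [hS2, Finset.coe_filter, Set.mem_setOf_eq, hS] at hp hp'
      rw [mem_solns] at hp hp'
      obtain ⟨⟨_, _, _, e⟩, _⟩ := hp
      obtain ⟨⟨_, _, _, e'⟩, _⟩ := hp'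
      have hx : (p.1 : ℤ) = p'.1 := by
        have : a * (p.1 : ℤ) = a * (p'.1 : ℤ) := by
          rw [he.1, he.2] at e; linarith
        exact mul_left_cancel₀ ha this
      have hx' : p.1 = p'.1 := by exact_mod_cast hx
      exact Prod.ext hx' (Prod.ext he.1 he.2)
  have h3 : S3.card ≤ C * (n + C) := by
    rw [← hcard_target]
    apply Finset.card_le_card_of_injOn (fun p => (p.2.2, p.1))
    · intro p hp
      rw [hS3, Finset.mem_coe, Finset.mem_filter, hS, mem_solns] at hp
      simp only [Finset.mem_coe, Finset.mem_product, Finset.mem_Ioc, Finset.mem_Icc]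
      exact ⟨⟨hp.2, hp.1.2.2.1.2⟩, hp.1.1.1, hp.1.1.2⟩
    · intro p hp p' hp' he
      simp only [Prod.mk.injEq] at he
      simp only [hS3, Finset.coe_filter, Set.mem_setOf_eq, hS] at hp hp'
      rw [mem_solns] at hp hp'
      obtain ⟨⟨_, _, _, e⟩, _⟩ := hp
      obtain ⟨⟨_, _, _, e'⟩, _⟩ := hp'
      have hy : (p.2.1 : ℤ) = p'.2.1 := by
        have : b * (p.2.1 : ℤ) = b * (p'.2.1 : ℤ) := by
          rw [he.1, he.2] at e; linarith
        exact mul_left_cancel₀ hb this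
      have hy' : p.2.1 = p'.2.1 := by exact_mod_cast hy
      exact Prod.ext he.2 (Prod.ext hy' he.1)
  calc S.card ≤ (solns a b c n ∪ (S1 ∪ (S2 ∪ S3))).card := Finset.card_le_card hsub
    _ ≤ (solns a b c n).card + (S1 ∪ (S2 ∪ S3)).card := Finset.card_union_le _ _
    _ ≤ (solns a b c n).card + (S1.card + (S2.card + S3.card)) := by
        have := Finset.card_union_le S1 (S2 ∪ S3)
        have := Finset.card_union_le S2 S3
        omega
    _ ≤ (solns a b c n).card + 3 * (C * (n + C)) := by omega

lemma mono_card_eq (a b c : ℤ) (hgcd : Int.gcd a (Int.gcd b c) = 1)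
    (m : ℕ) (hm3 : 3 ≤ m)
    (hdvd : ((m : ℤ) ∣ a ∧ (m : ℤ) ∣ b) ∨ ((m : ℤ) ∣ a ∧ (m : ℤ) ∣ c) ∨
      ((m : ℤ) ∣ b ∧ (m : ℤ) ∣ c)) (n : ℕ) :
    (mono a b c n (fun x => decide (x % m = 0))).card = (solns a b c (n / m)).card := by
  classical
  have hmpos : 0 < m := by omega
  have hm0' : (m : ℤ) ≠ 0 := by positivity
  have hcop : ∀ d : ℤ, ((m:ℤ) ∣ a ∧ (m:ℤ) ∣ b ∧ d = c) ∨ ((m:ℤ) ∣ a ∧ (m:ℤ) ∣ c ∧ d = b) ∨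
      ((m:ℤ) ∣ b ∧ (m:ℤ) ∣ c ∧ d = a) → Int.gcd (m:ℤ) d = 1 := by
    intro d hd
    have key : ∀ e : ℤ, (e ∣ a) → (e ∣ b) → (e ∣ c) → e ∣ 1 := by
      intro e hea heb hec
      have h1 : e ∣ (Int.gcd b c : ℤ) := Int.dvd_coe_gcd heb hec
      have h2 : e ∣ (Int.gcd a (Int.gcd b c) : ℤ) := Int.dvd_coe_gcd hea h1
      rw [hgcd] at h2
      exact_mod_cast h2
    have hgd : (Int.gcd (m:ℤ) d : ℤ) ∣ 1 := by
      have hgm : (Int.gcd (m:ℤ) d : ℤ) ∣ (m:ℤ) := Int.gcd_dvd_left _ _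
      have hgdd : (Int.gcd (m:ℤ) d : ℤ) ∣ d := Int.gcd_dvd_right _ _
      rcases hd with ⟨h1, h2, rfl⟩ | ⟨h1, h2, rfl⟩ | ⟨h1, h2, rfl⟩
      · exact key _ (hgm.trans h1) (hgm.trans h2) hgdd
      · exact key _ (hgm.trans h1) hgdd (hgm.trans h2)
      · exact key _ hgdd (hgm.trans h1) (hgm.trans h2)
    have h3 : (Int.gcd (m:ℤ) d) ∣ 1 := by exact_mod_cast hgd
    exact Nat.dvd_one.mp h3
  have ftrue : ∀ u : ℕ, m ∣ u → (decide (u % m = 0)) = true := by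
    intro u hu
    exact decide_eq_true (Nat.mod_eq_zero_of_dvd hu)
  have fdvd : ∀ u : ℕ, (decide (u % m = 0)) = true → m ∣ u := by
    intro u h
    exact Nat.dvd_of_mod_eq_zero (of_decide_eq_true h)
  have hdiv : ∀ p ∈ mono a b c n (fun x => decide (x % m = 0)),
      m ∣ p.1 ∧ m ∣ p.2.1 ∧ m ∣ p.2.2 := by
    intro p hp
    rw [mono, Finset.mem_filter] at hp
    obtain ⟨hps, hf1, hf2⟩ := hp
    rw [mem_solns] at hps
    obtain ⟨_, _, _, heq⟩ := hps
    have hone : m ∣ p.1 ∨ m ∣ p.2.1 ∨ m ∣ p.2.2 := by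
      rcases hdvd with ⟨h1, h2⟩ | ⟨h1, h2⟩ | ⟨h1, h2⟩
      · right; right
        have hmc : Int.gcd (m:ℤ) c = 1 := hcop c (Or.inl ⟨h1, h2, rfl⟩)
        have hdz : (m:ℤ) ∣ c * (p.2.2 : ℤ) := by
          obtain ⟨a', ea⟩ := h1
          obtain ⟨b', eb⟩ := h2
          exact ⟨-(a' * p.1 + b' * p.2.1), by rw [ea, eb] at heq; linarith [heq]⟩
        have := Int.dvd_of_dvd_mul_right_of_gcd_one hdz hmc
        exact_mod_cast this
      · right; left
        have hmb : Int.gcd (m:ℤ) b = 1 := hcop b (Or.inr (Or.inl ⟨h1, h2, rfl⟩))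
        have hdz : (m:ℤ) ∣ b * (p.2.1 : ℤ) := by
          obtain ⟨a', ea⟩ := h1
          obtain ⟨c', ec⟩ := h2
          exact ⟨-(a' * p.1 + c' * p.2.2), by rw [ea, ec] at heq; linarith [heq]⟩
        have := Int.dvd_of_dvd_mul_right_of_gcd_one hdz hmb
        exact_mod_cast this
      · left
        have hma : Int.gcd (m:ℤ) a = 1 := hcop a (Or.inr (Or.inr ⟨h1, h2, rfl⟩))
        have hdz : (m:ℤ) ∣ a * (p.1 : ℤ) := by
          obtain ⟨b', eb⟩ := h1
          obtain ⟨c', ec⟩ := h2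
          exact ⟨-(b' * p.2.1 + c' * p.2.2), by rw [eb, ec] at heq; linarith [heq]⟩
        have := Int.dvd_of_dvd_mul_right_of_gcd_one hdz hma
        exact_mod_cast this
    rcases hone with h | h | h
    · have t1 : (decide (p.1 % m = 0)) = true := ftrue _ h
      exact ⟨h, fdvd _ (by rw [← hf1]; exact t1), fdvd _ (by rw [← hf2]; exact t1)⟩
    · have t1 : (decide (p.2.1 % m = 0)) = true := ftrue _ h
      have t0 : (decide (p.1 % m = 0)) = true := by rw [hf1]; exact t1
      exact ⟨fdvd _ t0, h, fdvd _ (by rw [← hf2]; exact t0)⟩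
    · have t1 : (decide (p.2.2 % m = 0)) = true := ftrue _ h
      have t0 : (decide (p.1 % m = 0)) = true := by rw [hf2]; exact t1
      exact ⟨fdvd _ t0, fdvd _ (by rw [← hf1]; exact t0), h⟩
  have himg : mono a b c n (fun x => decide (x % m = 0)) =
      Finset.image (fun p : ℕ × ℕ × ℕ => (m * p.1, m * p.2.1, m * p.2.2))
        (solns a b c (n / m)) := by
    ext p
    constructor
    · intro hp
      obtain ⟨⟨x', hx'⟩, ⟨y', hy'⟩, ⟨z', hz'⟩⟩ := hdiv p hp
      rw [mono, Finset.mem_filter] at hp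
      obtain ⟨hps, _, _⟩ := hp
      rw [mem_solns] at hps
      obtain ⟨⟨hx1, hxn⟩, ⟨hy1, hyn⟩, ⟨hz1, hzn⟩, heq⟩ := hps
      rw [Finset.mem_image]
      refine ⟨(x', y', z'), ?_, ?_⟩
      · rw [mem_solns]
        have hx'1 : 1 ≤ x' := by
          rcases Nat.eq_zero_or_pos x' with h | h
          · rw [h, Nat.mul_zero] at hx'; omega
          · exact h
        have hy'1 : 1 ≤ y' := by
          rcases Nat.eq_zero_or_pos y' with h | h
          · rw [h, Nat.mul_zero] at hy'; omega
          · exact h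
        have hz'1 : 1 ≤ z' := by
          rcases Nat.eq_zero_or_pos z' with h | h
          · rw [h, Nat.mul_zero] at hz'; omega
          · exact h
        have hxd : x' ≤ n / m := (Nat.le_div_iff_mul_le hmpos).mpr (by rw [Nat.mul_comm, ← hx']; exact hxn)
        have hyd : y' ≤ n / m := (Nat.le_div_iff_mul_le hmpos).mpr (by rw [Nat.mul_comm, ← hy']; exact hyn)
        have hzd : z' ≤ n / m := (Nat.le_div_iff_mul_le hmpos).mpr (by rw [Nat.mul_comm, ← hz']; exact hzn)
        refine ⟨⟨hx'1, hxd⟩, ⟨hy'1, hyd⟩, ⟨hz'1, hzd⟩, ?_⟩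
        have heq2 : (m:ℤ) * (a * x' + b * y' + c * z') = 0 := by
          rw [hx', hy', hz'] at heq
          push_cast at heq
          linear_combination heq
        exact (mul_eq_zero.mp heq2).resolve_left hm0'
      · dsimp only
        rw [← hx', ← hy', ← hz']
    · intro hp
      rw [Finset.mem_image] at hp
      obtain ⟨q, hq, rfl⟩ := hp
      rw [mem_solns] at hq
      obtain ⟨⟨hx1, hxd⟩, ⟨hy1, hyd⟩, ⟨hz1, hzd⟩, heq⟩ := hq
      rw [mono, Finset.mem_filter]
      have hmdle : m * (n / m) ≤ n := by
        rw [Nat.mul_comm]; exact Nat.div_mul_le_self n m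
      constructor
      · rw [mem_solns]
        dsimp only
        refine ⟨⟨?_, ?_⟩, ⟨?_, ?_⟩, ⟨?_, ?_⟩, ?_⟩
        · exact Nat.one_le_iff_ne_zero.2 (Nat.mul_ne_zero (by omega) (by omega))
        · exact le_trans (Nat.mul_le_mul (le_refl m) hxd) hmdle
        · exact Nat.one_le_iff_ne_zero.2 (Nat.mul_ne_zero (by omega) (by omega))
        · exact le_trans (Nat.mul_le_mul (le_refl m) hyd) hmdle
        · exact Nat.one_le_iff_ne_zero.2 (Nat.mul_ne_zero (by omega) (by omega))
        · exact le_trans (Nat.mul_le_mul (le_refl m) hzd) hmdle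
        · push_cast
          linear_combination (m:ℤ) * heq
      · dsimp only
        simp [Nat.mul_mod_right]
  rw [himg]
  apply Finset.card_image_of_injective
  intro p q h
  simp only [Prod.mk.injEq] at h
  obtain ⟨h1, h2, h3⟩ := h
  exact Prod.ext (Nat.eq_of_mul_eq_mul_left hmpos h1)
    (Prod.ext (Nat.eq_of_mul_eq_mul_left hmpos h2) (Nat.eq_of_mul_eq_mul_left hmpos h3))


lemma muMin_nonneg (a b c : ℤ) (n : ℕ) : 0 ≤ muMin a b c n := by
  apply Real.sInf_nonneg
  rintro x ⟨f, rfl⟩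
  positivity

set_option maxHeartbeats 2000000 in
/-- If `a, b, c` are nonzero, not all of the same sign, `gcd(a, b, c) = 1`, and some
two of the three coefficients have a common factor `m ≥ 3`, then the equation
`a·x + b·y + c·z = 0` is uncommon over `[n]`; in fact
`limsup_{n→∞} μ_E([n]) ≤ 1/m² ≤ 1/9 < 1/4`. -/
theorem high_gcd_uncommon (a b c : ℤ) (ha : a ≠ 0) (hb : b ≠ 0) (hc : c ≠ 0)
    (hsign : ¬ ((0 < a ∧ 0 < b ∧ 0 < c) ∨ (a < 0 ∧ b < 0 ∧ c < 0)))
    (hgcd : Int.gcd a (Int.gcd b c) = 1) (m : ℕ) (hm3 : 3 ≤ m)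
    (hdvd : ((m : ℤ) ∣ a ∧ (m : ℤ) ∣ b) ∨ ((m : ℤ) ∣ a ∧ (m : ℤ) ∣ c) ∨
      ((m : ℤ) ∣ b ∧ (m : ℤ) ∣ c)) :
    limsup (fun n => muMin a b c n) atTop ≤ 1 / (m : ℝ) ^ 2 ∧
    (1 : ℝ) / (m : ℝ) ^ 2 ≤ 1 / 9 ∧ (1 : ℝ) / 9 < 1 / 4 := by
  have hm2pos : (0:ℝ) < (m:ℝ)^2 := by positivity
  have hm3R : (3:ℝ) ≤ (m:ℝ) := by exact_mod_cast hm3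
  refine ⟨?_, ?_, by norm_num⟩
  · -- the limsup bound
    obtain ⟨C, V, hV, hinj, hlow⟩ := counting a b c ha hb hc hsign hgcd m hm3
    have hcob : Filter.IsCoboundedUnder (· ≤ ·) Filter.atTop (fun n => muMin a b c n) :=
      Filter.isCoboundedUnder_le_of_le Filter.atTop (fun n => muMin_nonneg a b c n)
    have hmain : ∀ ε : ℝ, 0 < ε →
        limsup (fun n => muMin a b c n) atTop ≤ 1 / (m : ℝ) ^ 2 + ε := by
      intro ε hε
      apply Filter.limsup_le_of_le hcob
      set ε'' : ℝ := ε * (m:ℝ)^2 / (4*(V:ℝ)^2) with hε''d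
      have hVR : (1:ℝ) ≤ (V:ℝ) := by exact_mod_cast hV
      have hε'' : 0 < ε'' := by rw [hε''d]; positivity
      have h1 : ∀ᶠ n : ℕ in atTop, (3*(C:ℝ) + 3*(C:ℝ)^2)/ε'' ≤ (n:ℝ) :=
        (tendsto_natCast_atTop_atTop).eventually_ge_atTop _
      have h2 : ∀ᶠ n : ℕ in atTop, 2*V ≤ n := Filter.eventually_ge_atTop _
      filter_upwards [h1, h2] with n hn1 hn2
      -- natural number counting facts
      have e1 : m^2 * (solns a b c (n/m)).card ≤ (solns a b c (m*(n/m) + C)).card :=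
        hinj (n/m)
      have e2 : (solns a b c (m*(n/m) + C)).card ≤ (solns a b c (n + C)).card := by
        apply Finset.card_le_card
        apply solns_mono
        have : m * (n/m) ≤ n := by rw [Nat.mul_comm]; exact Nat.div_mul_le_self n m
        omega
      have e3 : (solns a b c (n + C)).card ≤ (solns a b c n).card + 3*(C*(n+C)) :=
        solns_boundary a b c ha hb hc n C
      have e123 : m^2 * (solns a b c (n/m)).card ≤
          (solns a b c n).card + 3*(C*(n+C)) := (e1.trans e2).trans e3
      set Sn : ℝ := ((solns a b c n).card : ℝ) with hSnd
      set Sk : ℝ := ((solns a b c (n/m)).card : ℝ) with hSkd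
      set Q : ℝ := ((n / V : ℕ) : ℝ) with hQd
      have ck : (m:ℝ)^2 * Sk ≤ Sn + 3*((C:ℝ)*((n:ℝ)+(C:ℝ))) := by
        rw [hSnd, hSkd]
        exact_mod_cast e123
      have f4 : Q^2 ≤ Sn := by
        rw [hSnd, hQd]
        exact_mod_cast hlow n
      have hd1 : 1 ≤ n / V := (Nat.le_div_iff_mul_le hV).mpr (by omega)
      have f5 : n ≤ 2*(V*(n/V)) := by
        have hdm := Nat.div_add_mod n V
        have hmod : n % V < V := Nat.mod_lt n hV
        have hVd : V * 1 ≤ V * (n/V) := Nat.mul_le_mul (le_refl V) hd1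
        linarith
      have hQn : (n:ℝ) ≤ 2*(V:ℝ)*Q := by
        rw [hQd]
        have := f5
        push_cast [← Nat.cast_le (α := ℝ)] at this ⊢
        linarith
      have hQ1 : (1:ℝ) ≤ Q := by rw [hQd]; exact_mod_cast hd1
      have hSnpos : 0 < Sn := lt_of_lt_of_le (by nlinarith) f4
      have hnR1 : (1:ℝ) ≤ (n:ℝ) := by
        have : (1:ℕ) ≤ n := by omega
        exact_mod_cast this
      have hB : 3*((C:ℝ)*((n:ℝ)+(C:ℝ))) ≤ ε'' * (n:ℝ)^2 := by
        have hstep : (3*(C:ℝ) + 3*(C:ℝ)^2) ≤ ε'' * (n:ℝ) := by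
          rw [div_le_iff₀ hε''] at hn1
          linarith
        have hCpos : (0:ℝ) ≤ (C:ℝ) := by positivity
        nlinarith [mul_le_mul_of_nonneg_right hstep (by linarith : (0:ℝ) ≤ (n:ℝ))]
      have hB2 : ε'' * (n:ℝ)^2 ≤ ε * ((m:ℝ)^2 * Sn) := by
        have hq2 : (n:ℝ)^2 ≤ 4*(V:ℝ)^2*Q^2 := by nlinarith [hQn, hQ1, hVR]
        have step1 : ε'' * (n:ℝ)^2 ≤ ε'' * (4*(V:ℝ)^2*Q^2) :=
          mul_le_mul_of_nonneg_left hq2 (le_of_lt hε'')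
        have step2 : ε'' * (4*(V:ℝ)^2*Q^2) = ε * ((m:ℝ)^2 * Q^2) := by
          rw [hε''d]; field_simp
        have step3 : ε * ((m:ℝ)^2 * Q^2) ≤ ε * ((m:ℝ)^2 * Sn) := by
          apply mul_le_mul_of_nonneg_left _ (le_of_lt hε)
          exact mul_le_mul_of_nonneg_left f4 (le_of_lt hm2pos)
        linarith
      have key : (m:ℝ)^2 * Sk ≤ Sn + ε * ((m:ℝ)^2 * Sn) := by linarith
      have step : Sk ≤ (Sn + ε * ((m:ℝ)^2 * Sn)) / (m:ℝ)^2 :=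
        (le_div_iff₀ hm2pos).mpr (by linarith)
      have eqn : (Sn + ε * ((m:ℝ)^2 * Sn)) / (m:ℝ)^2 = (1/(m:ℝ)^2 + ε) * Sn := by
        field_simp
      have hfrac : Sk / Sn ≤ 1/(m:ℝ)^2 + ε := by
        rw [div_le_iff₀ hSnpos, ← eqn]; exact step
      have hmu : muMin a b c n ≤ Sk / Sn := by
        have hmem : Sk / Sn ∈ {r : ℝ | ∃ f : ℕ → Bool,
            r = ((mono a b c n f).card : ℝ) / ((solns a b c n).card : ℝ)} := by
          refine ⟨fun x => decide (x % m = 0), ?_⟩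
          rw [mono_card_eq a b c hgcd m hm3 hdvd n]
        apply csInf_le _ hmem
        refine ⟨0, ?_⟩
        rintro r ⟨f, rfl⟩
        positivity
      exact hmu.trans hfrac
    by_contra hlt
    push_neg at hlt
    have hε : 0 < (limsup (fun n => muMin a b c n) atTop - 1 / (m:ℝ)^2) / 2 := by linarith
    have := hmain _ hε
    linarith
  · -- 1/m² ≤ 1/9
    apply one_div_le_one_div_of_le (by norm_num)
    nlinarith
end

section
/- Let a and c be positive integers with gcd(a, c) = 1. There exist constants C₁ > 0 and C > 0 (depending only on a and c) such that for all sufficiently large n and every coloring f : [n] → {−1, 1}: if the set R' = {x ∈ [n] : c divides x and f(x) = 1} of red multiples of c satisfies |R'| ≤ C₁·n, then there are at least C·n² solutions (x, y, z) ∈ [n]³ to a·x + a·y = c·z with f(x) = f(y) = f(z) = −1 (entirely blue solutions). -/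
/-!
Put `m = ⌊n / (2ac²)⌋`. For `m < s ≤ 2m` and `1 ≤ u ≤ cm` the triples `(cu, c(cs - u), c·as)` are
`cm²` distinct solutions of `ax + ay = cz` in `[n]³` whose entries are all multiples of `c`.
A multiple `r` of `c` is the first or the second entry of at most `m` of them (`s` determines the
rest) and the third entry of at most `cm` of them (`u` determines the rest). So at most
`|R'|(c + 2)m` of them have a red entry, which is at most `cm²/2` once `|R'| ≤ n / (8ac(c + 2))`;
the remaining `cm²/2 ≥ n² / (32a²c³)` are entirely blue.
-/

open Finset

/-- Entirely blue solutions `(x, y, z) ∈ [n]³` to `a·x + a·y = c·z` under the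
coloring `f` (blue is the color `false`, i.e. `−1`). -/
def blueSolns (a c : ℕ) (n : ℕ) (f : ℕ → Bool) : Finset (ℕ × ℕ × ℕ) :=
  ((Finset.Icc 1 n) ×ˢ (Finset.Icc 1 n) ×ˢ (Finset.Icc 1 n)).filter
    fun p => a * p.1 + a * p.2.1 = c * p.2.2 ∧
      f p.1 = false ∧ f p.2.1 = false ∧ f p.2.2 = false

section Counting

variable {α β γ : Type*}

theorem card_filter_mem_le_mul_card [DecidableEq β] {s : Finset α} {t : Finset γ}
    (R : Finset β) (g : α → β) (h : α → γ) (hh : ∀ p ∈ s, h p ∈ t)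
    (hinj : Set.InjOn (fun p => (g p, h p)) s) :
    #(s.filter fun p => g p ∈ R) ≤ #R * #t := by
  rw [← card_product]
  refine card_le_card_of_injOn _ (fun p hp => ?_) (hinj.mono (filter_subset _ s))
  rw [mem_coe, mem_filter] at hp
  exact mem_product.2 ⟨hp.2, hh p hp.1⟩

theorem card_le_card_filter_not_and_not_add (s : Finset α) (P₁ P₂ P₃ : α → Prop)
    [DecidablePred P₁] [DecidablePred P₂] [DecidablePred P₃] :
    #s ≤ #(s.filter fun p => ¬P₁ p ∧ ¬P₂ p ∧ ¬P₃ p) + #(s.filter P₁) + #(s.filter P₂)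
      + #(s.filter P₃) := by
  classical
  have hbad : s.filter (fun p => ¬(¬P₁ p ∧ ¬P₂ p ∧ ¬P₃ p)) ⊆
      s.filter P₁ ∪ s.filter P₂ ∪ s.filter P₃ := by
    intro p
    simp only [mem_filter, mem_union]
    tauto
  calc #s = #(s.filter fun p => ¬P₁ p ∧ ¬P₂ p ∧ ¬P₃ p)
        + #(s.filter fun p => ¬(¬P₁ p ∧ ¬P₂ p ∧ ¬P₃ p)) :=
        (card_filter_add_card_filter_not _).symm
    _ ≤ _ := by
      grw [hbad, card_union_le, card_union_le]
      omega

end Counting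

theorem exists_mul_le_and_le_two_mul {K n : ℕ} (hK : 0 < K) (hn : K ≤ n) :
    ∃ m, K * m ≤ n ∧ n ≤ 2 * K * m := by
  refine ⟨n / K, Nat.mul_div_le n K, ?_⟩
  have hm : 1 ≤ n / K := (Nat.le_div_iff_mul_le hK).2 (by omega)
  calc n ≤ K * (n / K + 1) := (Nat.lt_mul_div_succ n hK).le
    _ ≤ K * (n / K + n / K) := by gcongr
    _ = 2 * K * (n / K) := by ring

def redMultiples (c n : ℕ) (f : ℕ → Bool) : Finset ℕ :=
  (Icc 1 n).filter fun x => c ∣ x ∧ f x = true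

section Parametrization

variable (a c m : ℕ)

def paramBox : Finset (ℕ × ℕ) := Icc (m + 1) (2 * m) ×ˢ Icc 1 (c * m)

def paramSolution (p : ℕ × ℕ) : ℕ × ℕ × ℕ := (c * p.2, c * (c * p.1 - p.2), c * (a * p.1))

theorem card_Icc_add_one_two_mul : #(Icc (m + 1) (2 * m)) = m := by
  rw [Nat.card_Icc]
  omega

theorem card_paramBox : #(paramBox c m) = c * m ^ 2 := by
  rw [paramBox, card_product, card_Icc_add_one_two_mul, Nat.card_Icc, Nat.add_sub_cancel]
  ring

variable {a c m}

theorem add_le_mul_of_mem_paramBox {p : ℕ × ℕ} (hp : p ∈ paramBox c m) :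
    p.2 + c ≤ c * p.1 := by
  simp only [paramBox, mem_product, mem_Icc] at hp
  nlinarith

theorem paramSolution_solves {p : ℕ × ℕ} (hp : p.2 ≤ c * p.1) :
    a * (paramSolution a c p).1 + a * (paramSolution a c p).2.1 =
      c * (paramSolution a c p).2.2 := by
  obtain ⟨v, hv⟩ := Nat.exists_eq_add_of_le hp
  simp only [paramSolution, hv, Nat.add_sub_cancel_left]
  linear_combination a * c * hv.symm

theorem paramSolution_mem_Icc {n : ℕ} (ha : 0 < a) (hc : 0 < c) (hmn : 2 * a * c ^ 2 * m ≤ n)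
    {p : ℕ × ℕ} (hp : p ∈ paramBox c m) :
    (paramSolution a c p).1 ∈ Icc 1 n ∧ (paramSolution a c p).2.1 ∈ Icc 1 n ∧
      (paramSolution a c p).2.2 ∈ Icc 1 n := by
  have hpc := add_le_mul_of_mem_paramBox hp
  simp only [paramBox, mem_product, mem_Icc] at hp
  obtain ⟨⟨hs₁, hs₂⟩, hu₁, hu₂⟩ := hp
  simp only [paramSolution, mem_Icc]
  refine ⟨⟨Nat.mul_pos hc hu₁, ?_⟩, ⟨Nat.mul_pos hc (by omega), ?_⟩,
    Nat.mul_pos hc (Nat.mul_pos ha (by omega)), ?_⟩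
  · calc c * p.2 ≤ c * (c * m) := by gcongr
      _ ≤ 2 * a * (c * (c * m)) := Nat.le_mul_of_pos_left _ (by positivity)
      _ = 2 * a * c ^ 2 * m := by ring
      _ ≤ n := hmn
  · calc c * (c * p.1 - p.2) ≤ c * (c * (2 * m)) := by
          gcongr; exact (Nat.sub_le _ _).trans (by gcongr)
      _ ≤ a * (c * (c * (2 * m))) := Nat.le_mul_of_pos_left _ ha
      _ = 2 * a * c ^ 2 * m := by ring
      _ ≤ n := hmn
  · calc c * (a * p.1) ≤ c * (a * (2 * m)) := by gcongr
      _ ≤ c * (c * (a * (2 * m))) := Nat.mul_le_mul_left c (Nat.le_mul_of_pos_left _ hc)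
      _ = 2 * a * c ^ 2 * m := by ring
      _ ≤ n := hmn

theorem paramSolution_injective (ha : 0 < a) (hc : 0 < c) :
    Function.Injective (paramSolution a c) := by
  intro p q h
  simp only [paramSolution, Prod.mk.injEq] at h
  exact Prod.ext (Nat.eq_of_mul_eq_mul_left ha (Nat.eq_of_mul_eq_mul_left hc h.2.2))
    (Nat.eq_of_mul_eq_mul_left hc h.1)

theorem mul_sq_le_card_filter_paramBox_add (ha : 0 < a) (hc : 0 < c) (R : Finset ℕ) :
    c * m ^ 2 ≤ #((paramBox c m).filter fun p => (paramSolution a c p).1 ∉ R ∧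
      (paramSolution a c p).2.1 ∉ R ∧ (paramSolution a c p).2.2 ∉ R) + #R * ((c + 2) * m) := by
  have hs : ∀ p ∈ paramBox c m, p.1 ∈ Icc (m + 1) (2 * m) := fun p hp => (mem_product.1 hp).1
  have hu : ∀ p ∈ paramBox c m, p.2 ∈ Icc 1 (c * m) := fun p hp => (mem_product.1 hp).2
  have hx := card_filter_mem_le_mul_card R (fun p => (paramSolution a c p).1) _ hs
    fun p _ q _ h => by
      simp only [paramSolution, Prod.mk.injEq] at h
      exact Prod.ext h.2 (Nat.eq_of_mul_eq_mul_left hc h.1)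
  have hy := card_filter_mem_le_mul_card R (fun p => (paramSolution a c p).2.1) _ hs
    fun p hp q hq h => by
      simp only [paramSolution, Prod.mk.injEq] at h
      obtain ⟨hy_eq, hs_eq⟩ := h
      have hpq := Nat.eq_of_mul_eq_mul_left hc hy_eq
      have hp' := add_le_mul_of_mem_paramBox hp
      rw [hs_eq] at hpq hp'
      exact Prod.ext hs_eq (by have := add_le_mul_of_mem_paramBox hq; omega)
  have hz := card_filter_mem_le_mul_card R (fun p => (paramSolution a c p).2.2) _ hu
    fun p _ q _ h => by
      simp only [paramSolution, Prod.mk.injEq] at h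
      exact Prod.ext (Nat.eq_of_mul_eq_mul_left ha (Nat.eq_of_mul_eq_mul_left hc h.1)) h.2
  have hbox := card_le_card_filter_not_and_not_add (paramBox c m)
    (fun p => (paramSolution a c p).1 ∈ R) (fun p => (paramSolution a c p).2.1 ∈ R)
    (fun p => (paramSolution a c p).2.2 ∈ R)
  rw [card_paramBox] at hbox
  rw [card_Icc_add_one_two_mul] at hx hy
  rw [Nat.card_Icc, Nat.add_sub_cancel] at hz
  linarith

theorem card_filter_paramBox_le_card_blueSolns {n : ℕ} (ha : 0 < a) (hc : 0 < c)
    (hmn : 2 * a * c ^ 2 * m ≤ n) (f : ℕ → Bool) :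
    #((paramBox c m).filter fun p => (paramSolution a c p).1 ∉ redMultiples c n f ∧
      (paramSolution a c p).2.1 ∉ redMultiples c n f ∧
        (paramSolution a c p).2.2 ∉ redMultiples c n f) ≤ #(blueSolns a c n f) := by
  have hblue : ∀ w ∈ Icc 1 n, c ∣ w → w ∉ redMultiples c n f → f w = false := by
    intro w hw hcw hwR
    simpa [redMultiples, hw, hcw] using hwR
  refine card_le_card_of_injOn _ (fun p hp => ?_) (paramSolution_injective ha hc).injOn
  rw [mem_coe, mem_filter] at hp
  obtain ⟨hp, hx, hy, hz⟩ := hp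
  obtain ⟨hxn, hyn, hzn⟩ := paramSolution_mem_Icc ha hc hmn hp
  simp only [mem_coe, blueSolns, mem_filter, mem_product]
  exact ⟨⟨hxn, hyn, hzn⟩,
    paramSolution_solves ((Nat.le_add_right _ _).trans (add_le_mul_of_mem_paramBox hp)),
    hblue _ hxn (dvd_mul_right c _) hx, hblue _ hyn (dvd_mul_right c _) hy,
    hblue _ hzn (dvd_mul_right c _) hz⟩

end Parametrization

theorem few_red_multiples_many_blue_general (a c : ℕ) (ha : 0 < a) (hc : 0 < c) :
    ∃ C₁ C : ℝ, 0 < C₁ ∧ 0 < C ∧ ∃ N : ℕ, ∀ n ≥ N, ∀ f : ℕ → Bool,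
      ((((Finset.Icc 1 n).filter fun x => c ∣ x ∧ f x = true).card : ℝ) ≤ C₁ * n) →
      C * (n : ℝ) ^ 2 ≤ ((blueSolns a c n f).card : ℝ) := by
  refine ⟨(8 * a * c * (c + 2) : ℝ)⁻¹, (32 * a ^ 2 * c ^ 3 : ℝ)⁻¹, by positivity, by positivity,
    2 * a * c ^ 2, fun n hn f hR => ?_⟩
  change (#(redMultiples c n f) : ℝ) ≤ _ at hR
  obtain ⟨m, hmn, hnm⟩ := exists_mul_le_and_le_two_mul (by positivity) hn
  have hcount := (mul_sq_le_card_filter_paramBox_add ha hc (redMultiples c n f)).trans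
    (Nat.add_le_add_right (card_filter_paramBox_le_card_blueSolns ha hc hmn f) _)
  set r := #(redMultiples c n f)
  set B := #(blueSolns a c n f)
  have hcountR : (c * m ^ 2 : ℝ) ≤ B + r * ((c + 2) * m) := by exact_mod_cast hcount
  have hnmR : (n : ℝ) ≤ 2 * (2 * a * c ^ 2) * m := by exact_mod_cast hnm
  rw [inv_mul_eq_div, le_div_iff₀ (by positivity)] at hR
  have hbad : (r : ℝ) * ((c + 2) * m) ≤ c * m ^ 2 / 2 := by
    refine le_of_mul_le_mul_left ?_ (by positivity : (0 : ℝ) < 8 * a * c)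
    nlinarith [hR, hnmR, (Nat.cast_nonneg m : (0 : ℝ) ≤ m)]
  rw [inv_mul_eq_div, div_le_iff₀ (by positivity)]
  calc (n : ℝ) ^ 2 ≤ (2 * (2 * a * c ^ 2) * m : ℝ) ^ 2 := by gcongr
    _ = (c * m ^ 2 / 2 : ℝ) * (32 * a ^ 2 * c ^ 3) := by ring
    _ ≤ (B : ℝ) * (32 * a ^ 2 * c ^ 3) := by gcongr; linarith

/-- Let `a, c` be positive coprime integers. There are constants `C₁, C > 0` such that
for all sufficiently large `n` and every 2-coloring `f` of `[n]` (red is `true`,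
blue is `false`): if the set `R'` of red multiples of `c` in `[n]` has size at most
`C₁·n`, then there are at least `C·n²` entirely blue solutions to `a·x + a·y = c·z`. -/
theorem few_red_multiples_many_blue (a c : ℕ) (ha : 0 < a) (hc : 0 < c)
    (hcop : Nat.Coprime a c) :
    ∃ C₁ C : ℝ, 0 < C₁ ∧ 0 < C ∧ ∃ N : ℕ, ∀ n ≥ N, ∀ f : ℕ → Bool,
      ((((Finset.Icc 1 n).filter fun x => c ∣ x ∧ f x = true).card : ℝ) ≤ C₁ * n) →
      C * (n : ℝ) ^ 2 ≤ ((blueSolns a c n f).card : ℝ) :=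
  few_red_multiples_many_blue_general a c ha hc
end

section
/- Let k ≥ 2 be an even integer and n ≥ 1. For every coloring f : [n] → {−1, 1}, the number of monochromatic solutions (x₁, …, x_k) ∈ [n]^k to x₁ + ⋯ + x_{k/2} = x_{k/2+1} + ⋯ + x_k is at least 2^{1−k} times the total number of solutions (x₁, …, x_k) ∈ [n]^k to this equation. In particular μ_E([n]) ≥ 2^{1−k} for every n, so the additive tuple equation is common over [n]. -/
open Finset

/-- The set of solutions `(x₁, …, x_k) ∈ [n]^k` to the additive-tuple equation
`x₁ + ⋯ + x_{k/2} = x_{k/2+1} + ⋯ + x_k`. -/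
def tupleSolns (k n : ℕ) : Finset (Fin k → ℕ) :=
  (Fintype.piFinset fun _ => Finset.Icc 1 n).filter fun x =>
    ∑ i ∈ Finset.univ.filter (fun i : Fin k => (i : ℕ) < k / 2), x i =
      ∑ i ∈ Finset.univ.filter (fun i : Fin k => ¬ (i : ℕ) < k / 2), x i

/-- The set of additive-tuple solutions monochromatic under the coloring `f`. -/
def tupleMono (k n : ℕ) (f : ℕ → Bool) : Finset (Fin k → ℕ) :=
  (tupleSolns k n).filter fun x => ∀ i j, f (x i) = f (x j)

/-! Write `k = 2m`. Splitting a solution into its first and last `m` coordinates, the solutions with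
entries in `S` are the pairs of `m`-tuples from `S` with equal sums; call their number
`E(S)` (`tupleEnergy m S`).
For `N` larger than every `m`-fold sum and `e` the standard character of `ℤ/N`,
orthogonality gives `N · E(S) = ∑_t |Ŝ(t)|^(2m)` with
`Ŝ(t) = ∑_{x ∈ S} e(t x)` (`expSum N S t`).
If `[n] = A ⊔ B` is the colouring, then `Ŝ = Â + B̂`, and convexity,
`|a + b|^(2m) ≤ 2^(2m-1) (|a|^(2m) + |b|^(2m))`, yields `E([n]) ≤ 2^(k-1) (E(A) + E(B))`;
the right-hand side counts the monochromatic solutions. -/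

def tupleSolnsIn (k : ℕ) (S : Finset ℕ) : Finset (Fin k → ℕ) :=
  (Fintype.piFinset fun _ => S).filter fun x =>
    ∑ i ∈ univ.filter (fun i : Fin k => (i : ℕ) < k / 2), x i =
      ∑ i ∈ univ.filter (fun i : Fin k => ¬ (i : ℕ) < k / 2), x i

lemma tupleSolns_eq_tupleSolnsIn (k n : ℕ) : tupleSolns k n = tupleSolnsIn k (Icc 1 n) := rfl

def tupleEnergy (m : ℕ) (S : Finset ℕ) : ℕ :=
  #{p ∈ Fintype.piFinset (fun _ : Fin m => S) ×ˢ Fintype.piFinset (fun _ : Fin m => S) |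
    ∑ i, p.1 i = ∑ i, p.2 i}

section HalfSums

variable {M : Type*} [AddCommMonoid M] (m : ℕ) (x : Fin (m + m) → M)

lemma sum_filter_lt_half_add_self :
    ∑ i ∈ univ.filter (fun i : Fin (m + m) => (i : ℕ) < (m + m) / 2), x i =
      ∑ i : Fin m, x (Fin.castAdd m i) := by
  rw [sum_filter, show (m + m) / 2 = m by omega, Fin.sum_univ_add]
  simp

lemma sum_filter_not_lt_half_add_self :
    ∑ i ∈ univ.filter (fun i : Fin (m + m) => ¬ (i : ℕ) < (m + m) / 2), x i =
      ∑ i : Fin m, x (Fin.natAdd m i) := by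
  rw [sum_filter, show (m + m) / 2 = m by omega, Fin.sum_univ_add]
  simp

end HalfSums

lemma card_tupleSolnsIn_add_self (m : ℕ) (S : Finset ℕ) :
    #(tupleSolnsIn (m + m) S) = tupleEnergy m S :=
  card_equiv (Fin.appendEquiv m m).symm fun x => by
    rw [tupleSolnsIn, mem_filter, sum_filter_lt_half_add_self, sum_filter_not_lt_half_add_self]
    simp [Fin.forall_fin_add, and_assoc]

lemma tupleMono_eq_union (k n : ℕ) (f : ℕ → Bool) :
    tupleMono k n f =
      tupleSolnsIn k {x ∈ Icc 1 n | f x} ∪ tupleSolnsIn k {x ∈ Icc 1 n | ¬ f x} := by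
  ext x
  simp only [tupleMono, tupleSolns, tupleSolnsIn, mem_union, mem_filter, Fintype.mem_piFinset,
    forall_and]
  grind

lemma disjoint_tupleSolnsIn {k : ℕ} (hk : k ≠ 0) {A B : Finset ℕ} (hAB : Disjoint A B) :
    Disjoint (tupleSolnsIn k A) (tupleSolnsIn k B) := by
  have i₀ : Fin k := ⟨0, Nat.pos_of_ne_zero hk⟩
  refine disjoint_left.mpr fun x hxA hxB => disjoint_left.mp hAB (?_ : x i₀ ∈ A) ?_
  · exact Fintype.mem_piFinset.mp (mem_filter.mp hxA).1 i₀
  · exact Fintype.mem_piFinset.mp (mem_filter.mp hxB).1 i₀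

namespace AddChar

lemma map_sum_eq_prod {A M ι : Type*} [AddCommMonoid A] [CommMonoid M] (ψ : AddChar A M)
    (s : Finset ι) (a : ι → A) : ψ (∑ i ∈ s, a i) = ∏ i ∈ s, ψ (a i) :=
  map_prod ψ.toMonoidHom (fun i => Multiplicative.ofAdd (a i)) s

end AddChar

lemma norm_add_pow_le {E : Type*} [SeminormedAddGroup E] (a b : E) (n : ℕ) :
    ‖a + b‖ ^ n ≤ 2 ^ (n - 1) * (‖a‖ ^ n + ‖b‖ ^ n) :=
  (pow_le_pow_left₀ (norm_nonneg _) (norm_add_le a b) n).trans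
    (add_pow_le (norm_nonneg a) (norm_nonneg b) n)

noncomputable def expSum (N : ℕ) [NeZero N] (S : Finset ℕ) (t : ZMod N) : ℂ :=
  ∑ x ∈ S, ZMod.stdAddChar (t * (x : ZMod N))

section Fourier

variable {N : ℕ} [NeZero N]

lemma expSum_union {A B : Finset ℕ} (hAB : Disjoint A B) (t : ZMod N) :
    expSum N (A ∪ B) t = expSum N A t + expSum N B t :=
  sum_union hAB

lemma sum_stdAddChar_mul_conj {a c : ℕ} (ha : a < N) (hc : c < N) :
    ∑ t : ZMod N, ZMod.stdAddChar (t * (a : ZMod N)) *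
      (starRingEnd ℂ) (ZMod.stdAddChar (t * (c : ZMod N))) =
      if a = c then (N : ℂ) else 0 := by
  classical
  have hcast : ((a : ZMod N) - c = 0) ↔ a = c := by
    rw [sub_eq_zero, ZMod.natCast_eq_natCast_iff', Nat.mod_eq_of_lt ha, Nat.mod_eq_of_lt hc]
  simp_rw [← AddChar.map_neg_eq_conj, ← AddChar.map_add_eq_mul, ← mul_neg, ← mul_add,
    ← sub_eq_add_neg, AddChar.sum_mulShift _ (ZMod.isPrimitive_stdAddChar N), hcast, ZMod.card,
    Nat.cast_ite, Nat.cast_zero]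

lemma sum_piFinset_stdAddChar_eq_expSum_pow (m : ℕ) (S : Finset ℕ) (t : ZMod N) :
    ∑ y ∈ Fintype.piFinset (fun _ : Fin m => S),
        ZMod.stdAddChar (t * ((∑ i, y i : ℕ) : ZMod N)) = expSum N S t ^ m := by
  rw [expSum, ← Fin.prod_const, prod_univ_sum]
  refine sum_congr rfl fun y _ => ?_
  rw [Nat.cast_sum, mul_sum, AddChar.map_sum_eq_prod]

lemma mul_tupleEnergy_eq_sum_norm_expSum_pow (m : ℕ) {S : Finset ℕ} {b : ℕ}
    (hS : ∀ x ∈ S, x ≤ b) (hN : m * b < N) :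
    (N : ℝ) * tupleEnergy m S = ∑ t : ZMod N, ‖expSum N S t‖ ^ (2 * m) := by
  set T := Fintype.piFinset fun _ : Fin m => S
  have hsum_lt : ∀ y ∈ T, ∑ i, y i < N := fun y hy =>
    calc ∑ i, y i ≤ ∑ _i : Fin m, b :=
          sum_le_sum fun i _ => hS _ (Fintype.mem_piFinset.mp hy i)
      _ = m * b := by simp
      _ < N := hN
  suffices h : (N : ℂ) * tupleEnergy m S = ∑ t : ZMod N, (‖expSum N S t‖ : ℂ) ^ (2 * m) by
    exact_mod_cast h
  calc (N : ℂ) * tupleEnergy m S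
      = ∑ y ∈ T, ∑ z ∈ T, if ∑ i, y i = ∑ i, z i then (N : ℂ) else 0 := by
        simp only [T, tupleEnergy, card_filter, sum_product, Nat.cast_sum, Nat.cast_ite,
          Nat.cast_one, Nat.cast_zero, mul_sum, mul_ite, mul_one, mul_zero]
    _ = ∑ y ∈ T, ∑ z ∈ T, ∑ t : ZMod N,
          ZMod.stdAddChar (t * ((∑ i, y i : ℕ) : ZMod N)) *
            (starRingEnd ℂ) (ZMod.stdAddChar (t * ((∑ i, z i : ℕ) : ZMod N))) := by
        refine sum_congr rfl fun y hy => sum_congr rfl fun z hz => ?_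
        rw [sum_stdAddChar_mul_conj (hsum_lt y hy) (hsum_lt z hz)]
    _ = ∑ t : ZMod N, (∑ y ∈ T, ZMod.stdAddChar (t * ((∑ i, y i : ℕ) : ZMod N))) *
          (starRingEnd ℂ) (∑ z ∈ T, ZMod.stdAddChar (t * ((∑ i, z i : ℕ) : ZMod N))) := by
        simp_rw [map_sum, sum_mul_sum]
        exact (sum_congr rfl fun _ _ => sum_comm).trans sum_comm
    _ = ∑ t : ZMod N, (‖expSum N S t‖ : ℂ) ^ (2 * m) := by
        simp_rw [T, sum_piFinset_stdAddChar_eq_expSum_pow, Complex.mul_conj', norm_pow,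
          Complex.ofReal_pow, ← pow_mul, mul_comm m 2]

end Fourier

lemma tupleEnergy_union_le (m : ℕ) {A B : Finset ℕ} (hAB : Disjoint A B) :
    (tupleEnergy m (A ∪ B) : ℝ) ≤ 2 ^ (2 * m - 1) * (tupleEnergy m A + tupleEnergy m B) := by
  set b := (A ∪ B).sup id
  set N := m * b + 1
  have hN : m * b < N := Nat.lt_succ_self _
  have hle : ∀ x ∈ A ∪ B, x ≤ b := fun x hx => le_sup (f := id) hx
  have hA : ∀ x ∈ A, x ≤ b := fun x hx => hle x (mem_union_left B hx)
  have hB : ∀ x ∈ B, x ≤ b := fun x hx => hle x (mem_union_right A hx)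
  refine le_of_mul_le_mul_left ?_ (Nat.cast_pos.mpr ((Nat.zero_le _).trans_lt hN))
  calc (N : ℝ) * tupleEnergy m (A ∪ B)
      = ∑ t : ZMod N, ‖expSum N A t + expSum N B t‖ ^ (2 * m) := by
        simp_rw [mul_tupleEnergy_eq_sum_norm_expSum_pow m hle hN, expSum_union hAB]
    _ ≤ ∑ t : ZMod N,
          2 ^ (2 * m - 1) * (‖expSum N A t‖ ^ (2 * m) + ‖expSum N B t‖ ^ (2 * m)) :=
        sum_le_sum fun t _ => norm_add_pow_le _ _ _
    _ = N * (2 ^ (2 * m - 1) * (tupleEnergy m A + tupleEnergy m B)) := by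
        rw [← mul_sum, sum_add_distrib, ← mul_tupleEnergy_eq_sum_norm_expSum_pow m hA hN,
          ← mul_tupleEnergy_eq_sum_norm_expSum_pow m hB hN]
        ring

theorem additive_tuples_common_general (k : ℕ) (hk2 : 2 ≤ k) (hk : Even k)
    (n : ℕ) (f : ℕ → Bool) :
    ((tupleSolns k n).card : ℝ) / 2 ^ (k - 1) ≤ ((tupleMono k n f).card : ℝ) := by
  obtain ⟨m, rfl⟩ := hk
  have hk0 : m + m ≠ 0 := by omega
  have hAB : Disjoint {x ∈ Icc 1 n | f x} {x ∈ Icc 1 n | ¬ f x} :=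
    disjoint_filter_filter_not _ _ _
  have hsolns : #(tupleSolns (m + m) n) =
      tupleEnergy m ({x ∈ Icc 1 n | f x} ∪ {x ∈ Icc 1 n | ¬ f x}) := by
    rw [filter_union_filter_not_eq, tupleSolns_eq_tupleSolnsIn, card_tupleSolnsIn_add_self]
  have hmono : #(tupleMono (m + m) n f) =
      tupleEnergy m {x ∈ Icc 1 n | f x} + tupleEnergy m {x ∈ Icc 1 n | ¬ f x} := by
    rw [tupleMono_eq_union, card_union_of_disjoint (disjoint_tupleSolnsIn hk0 hAB),
      card_tupleSolnsIn_add_self, card_tupleSolnsIn_add_self]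
  rw [div_le_iff₀ (by positivity), hsolns, hmono, ← two_mul, mul_comm]
  push_cast
  exact tupleEnergy_union_le m hAB

/-- For `k ≥ 2` even and any 2-coloring of `[n]`, the number of monochromatic
solutions to `x₁ + ⋯ + x_{k/2} = x_{k/2+1} + ⋯ + x_k` is at least a `2^{1−k}`
fraction of the total number of solutions: additive tuples are common over `[n]`. -/
theorem additive_tuples_common (k : ℕ) (hk2 : 2 ≤ k) (hk : Even k)
    (n : ℕ) (hn : 1 ≤ n) (f : ℕ → Bool) :
    ((tupleSolns k n).card : ℝ) / 2 ^ (k - 1) ≤ ((tupleMono k n f).card : ℝ) :=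
  additive_tuples_common_general k hk2 hk n f
end

section
/- Let a, b, c be nonzero integers with gcd(a, b, c) = 1 and m := |c| > |a|, |b|. Let f : ℤ_m → [0, 1] be a function with f̂(0) = 1/2, where f̂(ξ) = (1/m)·Σ_{t ∈ ℤ_m} f(t)·e^{−2πiξt/m}. Then, interpreting the equation a·x + b·y + c·z = 0 modulo m (so that its solution set T ⊆ ℤ_m³ has exactly m² elements), (1/m²)·Σ_{(x,y,z) ∈ T} [f(x)f(y)f(z) + (1 − f(x))(1 − f(y))(1 − f(z))] = 1/4 + Σ_{t ∈ ℤ_m, a·t ≢ 0 and b·t ≢ 0 (mod m)} f̂(a·t)·f̂(b·t). -/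
open Finset Complex

/-- The Fourier transform of `f : ℤ_m → ℝ`:
`f̂(ξ) = (1/m)·Σ_{t ∈ ℤ_m} f(t)·e^{−2πiξt/m}`. -/
noncomputable def ft (m : ℕ) [NeZero m] (f : ZMod m → ℝ) (ξ : ZMod m) : ℂ :=
  (1 / (m : ℂ)) * ∑ t : ZMod m,
    (f t : ℂ) * Complex.exp (-2 * Real.pi * Complex.I * (ξ.val : ℂ) * (t.val : ℂ) / m)

/-!
By orthogonality of the characters `x ↦ e(-tx/m)`, the indicator of `a·x + b·y + c·z = 0` is
`(1/m) Σ_t e(-t(a·x + b·y + c·z)/m)`, so summing `f₁(x) f₂(y) f₃(z)` over the solutions gives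
`m² Σ_t f̂₁(a·t) f̂₂(b·t) f̂₃(c·t)`; with `f₁ = f₂ = f₃ = 1` this counts the solutions.
For the colouring, `m ∣ c` makes `f̂(c·t) = f̂(0) = 1/2`, and the complementary colouring `1 - f`
has transform `δ₀ - f̂`. Hence the two colours together contribute `f̂(a·t) f̂(b·t)` when
`a·t, b·t ≠ 0`, cancel when exactly one of them vanishes, and give `1/4` at `t = 0`, which by
`gcd(a, b, c) = 1` is the only `t` with `a·t = b·t = 0`.
-/

theorem intCast_mul_eq_zero_and_iff {R : Type*} [CommRing R] {a b c : ℤ}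
    (hgcd : Int.gcd a (Int.gcd b c) = 1) {t : R} :
    (a : R) * t = 0 ∧ (b : R) * t = 0 ∧ (c : R) * t = 0 ↔ t = 0 := by
  refine ⟨fun ⟨ha, hb, hc⟩ => ?_, by rintro rfl; simp⟩
  obtain ⟨u, v, huv⟩ : ∃ u v : ℤ, a * u + (b * b.gcdA c + c * b.gcdB c) * v = 1 :=
    ⟨_, _, by rw [← Int.gcd_eq_gcd_ab, ← Int.gcd_eq_gcd_ab, hgcd, Nat.cast_one]⟩
  have bezout : (a : R) * u + (b * b.gcdA c + c * b.gcdB c) * v = 1 := by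
    exact_mod_cast congrArg (Int.cast : ℤ → R) huv
  linear_combination (u : R) * ha + (b.gcdA c * v : R) * hb + (b.gcdB c * v : R) * hc - t * bezout

section Fourier

variable {m : ℕ} [NeZero m]

open ZMod

theorem natCast_mul_ft (f : ZMod m → ℝ) (ξ : ZMod m) :
    (m : ℂ) * ft m f ξ = ∑ t, (f t : ℂ) * stdAddChar (-(ξ * t)) := by
  rw [ft, ← mul_assoc, mul_one_div_cancel (NeZero.ne _), one_mul]
  refine sum_congr rfl fun t _ => ?_
  have hcast : -(ξ * t) = (Int.cast (-(ξ.val * t.val : ℤ)) : ZMod m) := by push_cast; simp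
  rw [hcast, stdAddChar_coe]
  congr 2
  push_cast
  ring

theorem sum_stdAddChar_neg_mul (s : ZMod m) :
    ∑ t : ZMod m, stdAddChar (-(s * t)) = if s = 0 then (m : ℂ) else 0 := by
  simp_rw [show ∀ t : ZMod m, -(s * t) = t * -s from fun t => by ring]
  rw [AddChar.sum_mulShift _ (isPrimitive_stdAddChar m), ZMod.card]
  simp

theorem ft_one (ξ : ZMod m) : ft m (fun _ => 1) ξ = if ξ = 0 then 1 else 0 := by
  rw [← mul_right_inj' (NeZero.ne (m : ℂ)), natCast_mul_ft]
  simp only [ofReal_one, one_mul, sum_stdAddChar_neg_mul, mul_ite, mul_one, mul_zero]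

theorem ft_one_sub (f : ZMod m → ℝ) (ξ : ZMod m) :
    ft m (fun t => 1 - f t) ξ = (if ξ = 0 then 1 else 0) - ft m f ξ := by
  rw [← ft_one, ft, ft, ft, ← mul_sub, ← sum_sub_distrib]
  simp only [ofReal_sub, ofReal_one, sub_mul]

theorem sum_solnsZ_mul_eq_sum_ft (a b c : ℤ) (f₁ f₂ f₃ : ZMod m → ℝ) :
    ∑ p ∈ solnsZ a b c m, (f₁ p.1 : ℂ) * f₂ p.2.1 * f₃ p.2.2 =
      (m : ℂ) ^ 2 * ∑ t : ZMod m,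
        ft m f₁ (a * t) * ft m f₂ (b * t) * ft m f₃ (c * t) := by
  have hm : (m : ℂ) ≠ 0 := NeZero.ne _
  have character_split : ∀ (u v w t x y z : ZMod m),
      stdAddChar (-((u * x + v * y + w * z) * t)) =
        stdAddChar (-(u * t * x)) * stdAddChar (-(v * t * y)) * stdAddChar (-(w * t * z)) := by
    intro u v w t x y z
    rw [← AddChar.map_add_eq_mul, ← AddChar.map_add_eq_mul]
    ring_nf
  calc ∑ p ∈ solnsZ a b c m, (f₁ p.1 : ℂ) * f₂ p.2.1 * f₃ p.2.2
      = ∑ p : ZMod m × ZMod m × ZMod m, (m : ℂ)⁻¹ * ∑ t : ZMod m,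
          (f₁ p.1 : ℂ) * f₂ p.2.1 * f₃ p.2.2
            * stdAddChar (-(((a : ZMod m) * p.1 + (b : ZMod m) * p.2.1 + (c : ZMod m) * p.2.2)
              * t)) := by
        rw [solnsZ, sum_filter]
        refine sum_congr rfl fun p _ => ?_
        rw [← mul_sum, sum_stdAddChar_neg_mul]
        split_ifs
        · field_simp
        · simp
    _ = (m : ℂ)⁻¹ * ∑ t : ZMod m,
          (∑ x, (f₁ x : ℂ) * stdAddChar (-((a : ZMod m) * t * x)))
            * (∑ y, (f₂ y : ℂ) * stdAddChar (-((b : ZMod m) * t * y)))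
            * (∑ z, (f₃ z : ℂ) * stdAddChar (-((c : ZMod m) * t * z))) := by
        rw [← mul_sum, sum_comm]
        congr 1
        refine sum_congr rfl fun t _ => ?_
        rw [mul_assoc, sum_mul_sum, ← Fintype.sum_prod_type', sum_mul_sum,
          ← Fintype.sum_prod_type']
        refine sum_congr rfl fun p _ => ?_
        rw [character_split]
        ring
    _ = (m : ℂ) ^ 2 * ∑ t : ZMod m,
          ft m f₁ (a * t) * ft m f₂ (b * t) * ft m f₃ (c * t) := by
        simp_rw [← natCast_mul_ft, mul_sum]
        refine sum_congr rfl fun t _ => ?_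
        field_simp

theorem card_solnsZ {a b c : ℤ} (hgcd : Int.gcd a (Int.gcd b c) = 1) :
    (solnsZ a b c m).card = m ^ 2 := by
  have hcount := sum_solnsZ_mul_eq_sum_ft (m := m) a b c (fun _ => 1) (fun _ => 1) (fun _ => 1)
  have delta : ∀ t : ZMod m, ft m (fun _ => 1) (a * t) * ft m (fun _ => 1) (b * t)
      * ft m (fun _ => 1) (c * t) = if t = 0 then 1 else 0 := fun t => by
    simp only [ft_one, ite_zero_mul_ite_zero, and_assoc, intCast_mul_eq_zero_and_iff hgcd,
      mul_one]
  simp only [ofReal_one, mul_one, sum_const, nsmul_eq_mul, delta, sum_ite_eq', mem_univ,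
    if_true] at hcount
  exact_mod_cast hcount

theorem ft_mul_ft_mul_ft_zero_add_one_sub {f : ZMod m → ℝ} (hf0 : ft m f 0 = 1 / 2)
    (u v : ZMod m) :
    ft m f u * ft m f v * ft m f 0
      + ft m (fun t => 1 - f t) u * ft m (fun t => 1 - f t) v * ft m (fun t => 1 - f t) 0 =
      (if u = 0 ∧ v = 0 then 1 / 4 else 0)
        + if u ≠ 0 ∧ v ≠ 0 then ft m f u * ft m f v else 0 := by
  rw [ft_one_sub, ft_one_sub, ft_one_sub]
  by_cases hu : u = 0 <;> by_cases hv : v = 0 <;> simp [hu, hv, hf0] <;> ring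

end Fourier

theorem expected_mono_proportion_fourier_general (a b c : ℤ)
    (hgcd : Int.gcd a (Int.gcd b c) = 1) (m : ℕ) [NeZero m]
    (hm : (m : ℤ) = |c|)
    (f : ZMod m → ℝ)
    (hf0 : ft m f 0 = 1 / 2) :
    (solnsZ a b c m).card = m ^ 2 ∧
    (1 / (m : ℂ) ^ 2) * ∑ p ∈ solnsZ a b c m,
        ((f p.1 * f p.2.1 * f p.2.2
          + (1 - f p.1) * (1 - f p.2.1) * (1 - f p.2.2) : ℝ) : ℂ) =
      1 / 4 + ∑ t ∈ Finset.univ.filter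
          (fun t : ZMod m => (a : ZMod m) * t ≠ 0 ∧ (b : ZMod m) * t ≠ 0),
        ft m f ((a : ZMod m) * t) * ft m f ((b : ZMod m) * t) := by
  refine ⟨card_solnsZ hgcd, ?_⟩
  have hc0 : (c : ZMod m) = 0 := by
    rw [ZMod.intCast_zmod_eq_zero_iff_dvd, hm]
    exact abs_dvd_self c
  have only_zero : ∀ t : ZMod m, (a : ZMod m) * t = 0 ∧ (b : ZMod m) * t = 0 ↔ t = 0 :=
    fun t => by simpa [hc0] using intCast_mul_eq_zero_and_iff (R := ZMod m) (t := t) hgcd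
  set g : ZMod m → ℝ := fun t => 1 - f t
  calc (1 / (m : ℂ) ^ 2) * ∑ p ∈ solnsZ a b c m,
        ((f p.1 * f p.2.1 * f p.2.2 + g p.1 * g p.2.1 * g p.2.2 : ℝ) : ℂ)
      = (1 / (m : ℂ) ^ 2) * (∑ p ∈ solnsZ a b c m, (f p.1 : ℂ) * f p.2.1 * f p.2.2
          + ∑ p ∈ solnsZ a b c m, (g p.1 : ℂ) * g p.2.1 * g p.2.2) := by
        rw [← sum_add_distrib]
        push_cast
        rfl
    _ = ∑ t : ZMod m, (ft m f (a * t) * ft m f (b * t) * ft m f (c * t)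
          + ft m g (a * t) * ft m g (b * t) * ft m g (c * t)) := by
        rw [sum_solnsZ_mul_eq_sum_ft, sum_solnsZ_mul_eq_sum_ft, ← mul_add, ← sum_add_distrib,
          ← mul_assoc, one_div_mul_cancel (pow_ne_zero 2 (NeZero.ne _)), one_mul]
    _ = ∑ t : ZMod m, ((if t = 0 then 1 / 4 else 0)
          + if (a : ZMod m) * t ≠ 0 ∧ (b : ZMod m) * t ≠ 0
            then ft m f (a * t) * ft m f (b * t) else 0) := by
        refine sum_congr rfl fun t _ => ?_
        rw [hc0, zero_mul, ft_mul_ft_mul_ft_zero_add_one_sub hf0]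
        simp only [only_zero]
    _ = _ := by rw [sum_add_distrib, sum_ite_eq', if_pos (mem_univ _), sum_filter]

/-- Let `a, b, c` be nonzero with `gcd(a, b, c) = 1` and `m := |c| > |a|, |b|`, and let
`f : ℤ_m → [0, 1]` be a probabilistic coloring with `f̂(0) = 1/2`. Then the solution
set `T ⊆ ℤ_m³` of `a·x + b·y + c·z ≡ 0 (mod m)` has exactly `m²` elements, and the
expected proportion of monochromatic solutions equals
`1/4 + Σ_{t : a·t ≢ 0, b·t ≢ 0} f̂(a·t)·f̂(b·t)`. -/
theorem expected_mono_proportion_fourier (a b c : ℤ)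
    (ha : a ≠ 0) (hb : b ≠ 0) (hc : c ≠ 0)
    (hgcd : Int.gcd a (Int.gcd b c) = 1) (m : ℕ) [NeZero m]
    (hm : (m : ℤ) = |c|) (hma : a.natAbs < m) (hmb : b.natAbs < m)
    (f : ZMod m → ℝ) (hf : ∀ t, f t ∈ Set.Icc (0 : ℝ) 1)
    (hf0 : ft m f 0 = 1 / 2) :
    (solnsZ a b c m).card = m ^ 2 ∧
    (1 / (m : ℂ) ^ 2) * ∑ p ∈ solnsZ a b c m,
        ((f p.1 * f p.2.1 * f p.2.2
          + (1 - f p.1) * (1 - f p.2.1) * (1 - f p.2.2) : ℝ) : ℂ) =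
      1 / 4 + ∑ t ∈ Finset.univ.filter
          (fun t : ZMod m => (a : ZMod m) * t ≠ 0 ∧ (b : ZMod m) * t ≠ 0),
        ft m f ((a : ZMod m) * t) * ft m f ((b : ZMod m) * t) :=
  expected_mono_proportion_fourier_general a b c hgcd m hm f hf0
end
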